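/- arXiv:math/9802035 — 7 statements merged into one kernel-verified Lean document; each statement's English description precedes it below -/
import Mathlib

section
/- Let U(a), a > 0, be a family of unitary operators on a Hilbert space H converging strongly to the identity as a → 1. Let T be a self-adjoint operator in H and T_a = f(a) · U(a) T U(a)⁻¹, where f(1) = 1 and f is differentiable at 1. If φ ∈ D(T) is an eigenvector of T with eigenvalue λ and φ ∈ D(T_a) for all a near 1, then lim_{a→1} ( U(a)φ, [(T_a − T)/(a − 1)] φ ) = λ f'(1) ‖φ‖². -/
open MeasureTheory Filter Classical

/-- Abstract virial theorem: if `U a` are unitaries converging strongly to the identity as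
`a → 1`, `T` is self-adjoint, `T_a = f a • U a ∘ T ∘ (U a)⁻¹` with `f 1 = 1`, `f` differentiable
at `1`, and `φ ∈ D(T) ∩ D(T_a)` is an eigenvector of `T` with eigenvalue `λ`, then
`(U a φ, (T_a − T)/(a−1) φ) → λ f'(1) ‖φ‖²` as `a → 1`. -/
theorem stmt_0 {H : Type*} [NormedAddCommGroup H] [InnerProductSpace ℂ H] [CompleteSpace H]
    (U : ℝ → (H ≃ₗᵢ[ℂ] H)) (T : H →ₗ.[ℂ] H) (Ta : ℝ → (H →ₗ.[ℂ] H)) (f : ℝ → ℝ)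
    (hT : IsSelfAdjoint T)
    (hU : ∀ x : H, Tendsto (fun a : ℝ => U a x) (nhdsWithin 1 (Set.Ioi 0 \ {1})) (nhds x))
    (hf1 : f 1 = 1) (hf : DifferentiableAt ℝ f 1)
    (hdom : ∀ a ∈ Set.Ioi (0 : ℝ), ((Ta a).domain : Set H) = (U a) '' (T.domain : Set H))
    (hact : ∀ a ∈ Set.Ioi (0 : ℝ), ∀ (x : T.domain) (hx : (U a x : H) ∈ (Ta a).domain),
        Ta a ⟨U a x, hx⟩ = ((f a : ℂ)) • U a (T x))
    (φ : H) (hφ : φ ∈ T.domain) (lam : ℝ)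
    (heig : T ⟨φ, hφ⟩ = (lam : ℂ) • φ)
    (hmem : ∀ a ∈ Set.Ioi (0 : ℝ), φ ∈ (Ta a).domain) :
    Tendsto
      (fun a : ℝ =>
        if h : φ ∈ (Ta a).domain then
          (inner ℂ (U a φ) ((((a - 1 : ℝ) : ℂ))⁻¹ • (Ta a ⟨φ, h⟩ - T ⟨φ, hφ⟩)) : ℂ)
        else 0)
      (nhdsWithin 1 (Set.Ioi 0 \ {1}))
      (nhds ((lam * deriv f 1 * ‖φ‖ ^ 2 : ℝ) : ℂ)) := by
  -- symmetry of T
  have hTeq : T.adjoint = T := LinearPMap.isSelfAdjoint_def.mp hT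
  have hsym : ∀ (x y : T.domain), (inner ℂ (T x) (y : H) : ℂ) = inner ℂ (x : H) (T y) := by
    have h := T.adjoint_isFormalAdjoint hT.dense_domain
    rw [hTeq] at h
    exact h
  -- auxiliary function
  set g : ℝ → ℂ := fun a =>
    (lam : ℂ) * (((f a - 1) / (a - 1) : ℝ) : ℂ) * (inner ℂ (U a φ) φ : ℂ) with hg
  have hEq : ∀ᶠ a in nhdsWithin 1 (Set.Ioi 0 \ {1}),
      (if h : φ ∈ (Ta a).domain then
          (inner ℂ (U a φ) ((((a - 1 : ℝ) : ℂ))⁻¹ • (Ta a ⟨φ, h⟩ - T ⟨φ, hφ⟩)) : ℂ)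
        else 0) = g a := by
    filter_upwards [self_mem_nhdsWithin] with a ha
    obtain ⟨ha0, hane⟩ := ha
    have hane : a ≠ 1 := hane
    have h := hmem a ha0
    rw [dif_pos h]
    -- get preimage x
    have hφim : φ ∈ (U a) '' (T.domain : Set H) := by rw [← hdom a ha0]; exact h
    obtain ⟨x, hx, hxφ⟩ := hφim
    have hx' : (U a x : H) ∈ (Ta a).domain := by rw [hxφ]; exact h
    have hTa : Ta a ⟨φ, h⟩ = ((f a : ℂ)) • U a (T ⟨x, hx⟩) := by
      rw [← hact a ha0 ⟨x, hx⟩ hx']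
      congr 1
      exact Subtype.ext hxφ.symm
    -- inner products
    have h1 : (inner ℂ (U a φ) (U a (T ⟨x, hx⟩)) : ℂ) = (lam : ℂ) * inner ℂ (U a φ) φ := by
      rw [LinearIsometryEquiv.inner_map_map]
      have h2 : (inner ℂ (φ : H) (T ⟨x, hx⟩) : ℂ) = inner ℂ (T ⟨φ, hφ⟩) (x : H) :=
        (hsym ⟨φ, hφ⟩ ⟨x, hx⟩).symm
      have h3 : (inner ℂ (φ : H) (x : H) : ℂ) = inner ℂ (U a φ) φ := by
        rw [← LinearIsometryEquiv.inner_map_map (U a) φ x, hxφ]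
      rw [h2, heig, inner_smul_left, h3]
      simp
    have h4 : (inner ℂ (U a φ) (T ⟨φ, hφ⟩) : ℂ) = (lam : ℂ) * inner ℂ (U a φ) φ := by
      rw [heig, inner_smul_right]
    rw [hTa, inner_smul_right, inner_sub_right, inner_smul_right, h1, h4, hg]
    have hane' : (a : ℂ) - 1 ≠ 0 := by
      intro hcon
      apply hane
      have : (a : ℂ) = 1 := by linear_combination hcon
      exact_mod_cast this
    push_cast
    field_simp
  refine Tendsto.congr' (Filter.EventuallyEq.symm hEq) ?_
  -- limit of g
  have hslope : Tendsto (fun a : ℝ => (f a - 1) / (a - 1)) (nhdsWithin 1 (Set.Ioi 0 \ {1}))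
      (nhds (deriv f 1)) := by
    have h := hf.hasDerivAt
    rw [hasDerivAt_iff_tendsto_slope] at h
    have hmono : nhdsWithin (1 : ℝ) (Set.Ioi 0 \ {1}) ≤ nhdsWithin 1 {1}ᶜ :=
      nhdsWithin_mono _ (fun x hx => hx.2)
    have h' := h.mono_left hmono
    refine h'.congr (fun a => ?_)
    simp [slope_def_field, hf1, div_eq_inv_mul]
  have hinner : Tendsto (fun a : ℝ => (inner ℂ (U a φ) φ : ℂ)) (nhdsWithin 1 (Set.Ioi 0 \ {1}))
      (nhds (inner ℂ φ φ)) := (hU φ).inner tendsto_const_nhds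
  have hlim : Tendsto g (nhdsWithin 1 (Set.Ioi 0 \ {1}))
      (nhds ((lam : ℂ) * ((deriv f 1 : ℝ) : ℂ) * inner ℂ φ φ)) := by
    exact (tendsto_const_nhds.mul ((Complex.continuous_ofReal.tendsto _).comp hslope)).mul hinner
  have : (inner ℂ φ φ : ℂ) = ((‖φ‖ ^ 2 : ℝ) : ℂ) := by
    rw [inner_self_eq_norm_sq_to_K]; norm_cast
  rw [this] at hlim
  convert hlim using 2
  push_cast
  ring
end

section
/- For 1 < α < 3, the integral ∫_{ℝ³} |p − p'|⁻² |p'|^{−α} dp' is finite and equals C_α |p|^{1−α} for some constant C_α, for every nonzero p ∈ ℝ³. -/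
open MeasureTheory Measure Metric Set
open scoped ENNReal RealInnerProductSpace

noncomputable section

local notation "E3" => EuclideanSpace ℝ (Fin 3)

private lemma aux_exists_rot (u v : E3) (h : ‖u‖ = ‖v‖) :
    ∃ R : E3 ≃ₗᵢ[ℝ] E3, R u = v := by
  rcases eq_or_ne u v with rfl | huv
  · exact ⟨.refl ℝ _, rfl⟩
  have hw : u - v ≠ 0 := sub_ne_zero.2 huv
  have hw2 : (0:ℝ) < ‖u - v‖ ^ 2 := pow_pos (norm_pos_iff.2 hw) 2
  refine ⟨Submodule.reflection (ℝ ∙ (u - v))ᗮ, ?_⟩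
  rw [Submodule.reflection_orthogonal_apply, Submodule.reflection_singleton_apply]
  have hil : (inner ℝ (u - v) u : ℝ) = ‖u‖ ^ 2 - inner ℝ u v := by
    rw [inner_sub_left, real_inner_self_eq_norm_sq, real_inner_comm]
  have expand : ‖u - v‖ ^ 2 = ‖u‖ ^ 2 - 2 * (inner ℝ u v : ℝ) + ‖v‖ ^ 2 := norm_sub_sq_real u v
  have h2 : 2 * (inner ℝ (u - v) u : ℝ) = ‖u - v‖ ^ 2 := by
    rw [hil, expand, ← h]; ring
  have hi0 : (inner ℝ (u - v) u : ℝ) ≠ 0 := by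
    intro h0
    rw [h0, mul_zero] at h2
    exact hw2.ne h2
  have hc : (inner ℝ (u - v) u : ℝ) / ((‖u - v‖ : ℝ) ^ 2) = 1 / 2 := by
    rw [← h2, div_eq_iff (mul_ne_zero two_ne_zero hi0)]; ring
  simp only [RCLike.ofReal_real_eq_id, id_eq]
  rw [hc]
  module

private lemma aux_radial (g : ℝ → ℝ≥0∞) (hg : Measurable g) :
    ∫⁻ x : E3, g ‖x‖ =
      (volume : Measure E3).toSphere univ *
        ∫⁻ r in Ioi (0:ℝ), ENNReal.ofReal (r ^ 2) * g r := by
  have hdim : Module.finrank ℝ E3 = 3 := finrank_euclideanSpace_fin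
  have h1 : ∫⁻ x : E3, g ‖x‖ =
      ∫⁻ x : ({0}ᶜ : Set E3), g ‖(x : E3)‖ ∂((volume : Measure E3).comap (↑)) := by
    have := lintegral_subtype_comap (μ := (volume : Measure E3))
      (MeasurableSet.singleton 0).compl (fun a => g ‖a‖)
    rw [MeasureTheory.restrict_compl_singleton] at this
    exact this.symm
  have h2 : ∫⁻ x : ({0}ᶜ : Set E3), g ‖(x : E3)‖ ∂((volume : Measure E3).comap (↑)) =
      ∫⁻ p : sphere (0:E3) 1 × Ioi (0:ℝ), g p.2
        ∂((volume : Measure E3).toSphere.prod (volumeIoiPow (Module.finrank ℝ E3 - 1))) := by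
    have hcmp := (volume : Measure E3).measurePreserving_homeomorphUnitSphereProd.lintegral_comp_emb
      (Homeomorph.measurableEmbedding _) (fun p : sphere (0:E3) 1 × Ioi (0:ℝ) => g p.2)
    refine Eq.trans ?_ hcmp
    apply lintegral_congr
    intro x
    simp
  have h3 : ∫⁻ p : sphere (0:E3) 1 × Ioi (0:ℝ), g p.2
        ∂((volume : Measure E3).toSphere.prod (volumeIoiPow (Module.finrank ℝ E3 - 1))) =
      (volume : Measure E3).toSphere univ *
        ∫⁻ r : Ioi (0:ℝ), g r ∂(volumeIoiPow 2) := by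
    rw [hdim]
    have hmf : Measurable (fun p : sphere (0:E3) 1 × Ioi (0:ℝ) => g p.2) :=
      hg.comp (measurable_subtype_coe.comp measurable_snd)
    rw [lintegral_prod _ hmf.aemeasurable]
    simp [lintegral_const, mul_comm]
  have h4 : ∫⁻ r : Ioi (0:ℝ), g r ∂(volumeIoiPow 2) =
      ∫⁻ r in Ioi (0:ℝ), ENNReal.ofReal (r ^ 2) * g r := by
    have hd : Measurable (fun r : Ioi (0:ℝ) => ENNReal.ofReal ((r:ℝ) ^ 2)) :=
      (measurable_subtype_coe.pow_const 2).ennreal_ofReal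
    have hgs : Measurable (fun r : Ioi (0:ℝ) => g r) := hg.comp measurable_subtype_coe
    rw [Measure.volumeIoiPow, lintegral_withDensity_eq_lintegral_mul _ hd hgs]
    exact lintegral_subtype_comap measurableSet_Ioi fun r => ENNReal.ofReal (r ^ 2) * g r
  rw [h1, h2, h3, h4]

private lemma aux_radial_lt (g : ℝ → ℝ≥0∞) (hg : Measurable g)
    (h : ∫⁻ r in Ioi (0:ℝ), ENNReal.ofReal (r ^ 2) * g r < ⊤) :
    ∫⁻ x : E3, g ‖x‖ < ⊤ := by
  rw [aux_radial g hg]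
  exact ENNReal.mul_lt_top (measure_lt_top _ _) h

private lemma aux_fin {f : ℝ → ℝ} {s : Set ℝ} (h : IntegrableOn f s) :
    ∫⁻ r in s, ENNReal.ofReal (f r) < ⊤ :=
  lt_of_le_of_lt (lintegral_mono fun r => Real.ofReal_le_enorm (f r)) h.2

private lemma aux_int_e (α : ℝ) (hα1 : 1 < α) (hα3 : α < 3) {e : E3} (he : ‖e‖ = 1) :
    Integrable (fun x : E3 => ‖e - x‖ ^ (-2:ℝ) * ‖x‖ ^ (-α)) := by
  have hmeas : Measurable (fun x : E3 => ‖e - x‖ ^ (-2:ℝ) * ‖x‖ ^ (-α)) :=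
    ((measurable_const.sub measurable_id).norm.pow_const (-2:ℝ)).mul (measurable_norm.pow_const (-α))
  refine ⟨hmeas.aestronglyMeasurable, ?_⟩
  rw [hasFiniteIntegral_iff_ofReal (Filter.Eventually.of_forall fun x => by positivity)]
  set g₁ : ℝ → ℝ≥0∞ := indicator (Iio (1/2:ℝ)) (fun r => ENNReal.ofReal (4 * r ^ (-α))) with hg₁
  set g₂ : ℝ → ℝ≥0∞ := indicator (Iio (3:ℝ)) (fun r => ENNReal.ofReal (2 ^ α * r ^ (-2:ℝ))) with hg₂
  set g₃ : ℝ → ℝ≥0∞ := indicator (Ici (2:ℝ)) (fun r => ENNReal.ofReal (4 * r ^ (-(2+α)))) with hg₃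
  have hm₁ : Measurable g₁ :=
    ((measurable_const.mul (measurable_id.pow_const _)).ennreal_ofReal).indicator measurableSet_Iio
  have hm₂ : Measurable g₂ :=
    ((measurable_const.mul (measurable_id.pow_const _)).ennreal_ofReal).indicator measurableSet_Iio
  have hm₃ : Measurable g₃ :=
    ((measurable_const.mul (measurable_id.pow_const _)).ennreal_ofReal).indicator measurableSet_Ici
  have key : ∀ x : E3, ENNReal.ofReal (‖e - x‖ ^ (-2:ℝ) * ‖x‖ ^ (-α)) ≤
      g₁ ‖x‖ + g₂ ‖x - e‖ + g₃ ‖x‖ := by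
    intro x
    rcases lt_or_ge ‖x‖ (1/2:ℝ) with hx | hx
    · -- near zero
      have hbig : (1/2:ℝ) ≤ ‖e - x‖ := by
        have h1 := norm_sub_norm_le e x
        rw [he] at h1
        linarith
      have hb : ‖e - x‖ ^ (-2:ℝ) ≤ 4 := by
        have h4 : ((1:ℝ)/2) ^ (-2:ℝ) = 4 := by
          rw [show (-2:ℝ) = ((-2:ℤ):ℝ) by norm_num, Real.rpow_intCast]
          norm_num
        calc ‖e - x‖ ^ (-2:ℝ) ≤ ((1:ℝ)/2) ^ (-2:ℝ) :=
              Real.rpow_le_rpow_of_nonpos (by norm_num) hbig (by norm_num)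
          _ = 4 := h4
      have : ‖e - x‖ ^ (-2:ℝ) * ‖x‖ ^ (-α) ≤ 4 * ‖x‖ ^ (-α) :=
        mul_le_mul_of_nonneg_right hb (Real.rpow_nonneg (norm_nonneg _) _)
      calc ENNReal.ofReal (‖e - x‖ ^ (-2:ℝ) * ‖x‖ ^ (-α)) ≤
            ENNReal.ofReal (4 * ‖x‖ ^ (-α)) := ENNReal.ofReal_le_ofReal this
        _ = g₁ ‖x‖ := by rw [hg₁, indicator_of_mem (mem_Iio.mpr hx)]
        _ ≤ _ := le_add_of_le_of_nonneg (le_add_of_le_of_nonneg le_rfl zero_le) zero_le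
    · rcases lt_or_ge ‖x - e‖ (3:ℝ) with hxe | hxe
      · -- middle region
        have hxpos : (0:ℝ) < ‖x‖ := lt_of_lt_of_le (by norm_num) hx
        have hb : ‖x‖ ^ (-α) ≤ 2 ^ α := by
          have h4 : ((1:ℝ)/2) ^ (-α) = 2 ^ α := by
            rw [one_div, ← Real.rpow_neg_one 2, ← Real.rpow_mul (by norm_num : (0:ℝ) ≤ 2),
              show ((-1:ℝ) * -α) = α by ring]
          calc ‖x‖ ^ (-α) ≤ ((1:ℝ)/2) ^ (-α) :=
                Real.rpow_le_rpow_of_nonpos (by norm_num) hx (by linarith)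
            _ = 2 ^ α := h4
        have : ‖e - x‖ ^ (-2:ℝ) * ‖x‖ ^ (-α) ≤ 2 ^ α * ‖x - e‖ ^ (-2:ℝ) := by
          rw [norm_sub_rev e x, mul_comm]
          exact mul_le_mul_of_nonneg_right hb (Real.rpow_nonneg (norm_nonneg _) _)
        calc ENNReal.ofReal (‖e - x‖ ^ (-2:ℝ) * ‖x‖ ^ (-α)) ≤
              ENNReal.ofReal (2 ^ α * ‖x - e‖ ^ (-2:ℝ)) := ENNReal.ofReal_le_ofReal this
          _ = g₂ ‖x - e‖ := by rw [hg₂, indicator_of_mem (mem_Iio.mpr hxe)]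
          _ ≤ _ := le_add_of_le_of_nonneg (le_add_of_nonneg_left zero_le) zero_le
      · -- far region
        have hx2 : (2:ℝ) ≤ ‖x‖ := by
          have h1 := norm_sub_le x e
          rw [he] at h1
          linarith
        have hxpos : (0:ℝ) < ‖x‖ := by linarith
        have hbig : ‖x‖ / 2 ≤ ‖e - x‖ := by
          rw [norm_sub_rev]
          have := norm_sub_norm_le x e
          rw [he] at this
          linarith
        have hb : ‖e - x‖ ^ (-2:ℝ) ≤ 4 * ‖x‖ ^ (-2:ℝ) := by
          have h4 : (‖x‖/2) ^ (-2:ℝ) = 4 * ‖x‖ ^ (-2:ℝ) := by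
            rw [div_eq_mul_inv, Real.mul_rpow (norm_nonneg _) (by norm_num)]
            rw [show ((2:ℝ)⁻¹) ^ (-2:ℝ) = 4 by
              rw [show (-2:ℝ) = ((-2:ℤ):ℝ) by norm_num, Real.rpow_intCast]; norm_num]
            ring
          calc ‖e - x‖ ^ (-2:ℝ) ≤ (‖x‖/2) ^ (-2:ℝ) :=
                Real.rpow_le_rpow_of_nonpos (by linarith) hbig (by norm_num)
            _ = 4 * ‖x‖ ^ (-2:ℝ) := h4
        have heq : ‖x‖ ^ (-2:ℝ) * ‖x‖ ^ (-α) = ‖x‖ ^ (-(2+α)) := by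
          rw [show (-(2+α)) = (-2) + (-α) by ring, Real.rpow_add hxpos]
        have : ‖e - x‖ ^ (-2:ℝ) * ‖x‖ ^ (-α) ≤ 4 * ‖x‖ ^ (-(2+α)) := by
          calc ‖e - x‖ ^ (-2:ℝ) * ‖x‖ ^ (-α) ≤ (4 * ‖x‖ ^ (-2:ℝ)) * ‖x‖ ^ (-α) :=
                mul_le_mul_of_nonneg_right hb (Real.rpow_nonneg (norm_nonneg _) _)
            _ = 4 * ‖x‖ ^ (-(2+α)) := by rw [mul_assoc, heq]
        calc ENNReal.ofReal (‖e - x‖ ^ (-2:ℝ) * ‖x‖ ^ (-α)) ≤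
              ENNReal.ofReal (4 * ‖x‖ ^ (-(2+α))) := ENNReal.ofReal_le_ofReal this
          _ = g₃ ‖x‖ := by rw [hg₃, indicator_of_mem (mem_Ici.mpr hx2)]
          _ ≤ _ := le_add_of_nonneg_left zero_le
  have split : ∫⁻ x : E3, ENNReal.ofReal (‖e - x‖ ^ (-2:ℝ) * ‖x‖ ^ (-α)) ≤
      (∫⁻ x : E3, g₁ ‖x‖) + (∫⁻ x : E3, g₂ ‖x - e‖) + ∫⁻ x : E3, g₃ ‖x‖ := by
    calc ∫⁻ x : E3, ENNReal.ofReal (‖e - x‖ ^ (-2:ℝ) * ‖x‖ ^ (-α)) ≤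
          ∫⁻ x : E3, (g₁ ‖x‖ + g₂ ‖x - e‖ + g₃ ‖x‖) := lintegral_mono key
      _ = _ := by
        have hmn₃ : Measurable (fun x : E3 => g₃ ‖x‖) := hm₃.comp measurable_norm
        have hmn₂ : Measurable (fun x : E3 => g₂ ‖x - e‖) :=
          hm₂.comp ((measurable_id.sub_const e).norm)
        rw [lintegral_add_right _ hmn₃, lintegral_add_right _ hmn₂]
  have F₁ : ∫⁻ x : E3, g₁ ‖x‖ < ⊤ := by
    apply aux_radial_lt g₁ hm₁
    have hb : ∀ r ∈ Ioi (0:ℝ), ENNReal.ofReal (r ^ 2) * g₁ r ≤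
        indicator (Ioo (0:ℝ) (1/2)) (fun r => ENNReal.ofReal (4 * r ^ ((2:ℝ) - α))) r := by
      intro r hr
      rcases lt_or_ge r (1/2:ℝ) with h | h
      · rw [hg₁, indicator_of_mem (mem_Iio.mpr h),
          indicator_of_mem (mem_Ioo.mpr ⟨hr, h⟩),
          ← ENNReal.ofReal_mul (sq_nonneg r)]
        apply ENNReal.ofReal_le_ofReal
        rw [show ((2:ℝ) - α) = 2 + (-α) by ring, Real.rpow_add hr, Real.rpow_two]
        ring_nf
        exact le_refl _
      · rw [hg₁, indicator_of_notMem (by simpa using h), mul_zero]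
        exact zero_le
    calc ∫⁻ r in Ioi (0:ℝ), ENNReal.ofReal (r ^ 2) * g₁ r ≤
          ∫⁻ r in Ioi (0:ℝ),
            indicator (Ioo (0:ℝ) (1/2)) (fun r => ENNReal.ofReal (4 * r ^ ((2:ℝ) - α))) r :=
        setLIntegral_mono (((measurable_const.mul
          (measurable_id.pow_const _)).ennreal_ofReal).indicator measurableSet_Ioo) hb
      _ ≤ ∫⁻ r, indicator (Ioo (0:ℝ) (1/2))
            (fun r => ENNReal.ofReal (4 * r ^ ((2:ℝ) - α))) r := setLIntegral_le_lintegral _ _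
      _ = ∫⁻ r in Ioo (0:ℝ) (1/2), ENNReal.ofReal (4 * r ^ ((2:ℝ) - α)) :=
        lintegral_indicator measurableSet_Ioo _
      _ < ⊤ := by
        apply aux_fin
        have h1 : IntervalIntegrable (fun r : ℝ => r ^ ((2:ℝ) - α)) volume 0 (1/2) :=
          intervalIntegral.intervalIntegrable_rpow' (by linarith)
        have h2 : IntegrableOn (fun r : ℝ => r ^ ((2:ℝ) - α)) (Ioc (0:ℝ) (1/2)) :=
          (intervalIntegrable_iff_integrableOn_Ioc_of_le (by norm_num)).1 h1
        exact (h2.mono_set Ioo_subset_Ioc_self).const_mul 4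
  have F₂ : ∫⁻ x : E3, g₂ ‖x - e‖ < ⊤ := by
    rw [lintegral_sub_right_eq_self (fun x : E3 => g₂ ‖x‖) e]
    apply aux_radial_lt g₂ hm₂
    have hb : ∀ r ∈ Ioi (0:ℝ), ENNReal.ofReal (r ^ 2) * g₂ r ≤
        indicator (Ioo (0:ℝ) 3) (fun _ => ENNReal.ofReal (2 ^ α)) r := by
      intro r hr
      rcases lt_or_ge r (3:ℝ) with h | h
      · rw [hg₂, indicator_of_mem (mem_Iio.mpr h),
          indicator_of_mem (mem_Ioo.mpr ⟨hr, h⟩),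
          ← ENNReal.ofReal_mul (sq_nonneg r)]
        apply ENNReal.ofReal_le_ofReal
        have : r ^ 2 * (2 ^ α * r ^ (-2:ℝ)) = 2 ^ α * (r ^ (2:ℝ) * r ^ (-2:ℝ)) := by
          rw [Real.rpow_two]; ring
        rw [this, ← Real.rpow_add hr]
        norm_num
      · rw [hg₂, indicator_of_notMem (by simpa using h), mul_zero]
        exact zero_le
    calc ∫⁻ r in Ioi (0:ℝ), ENNReal.ofReal (r ^ 2) * g₂ r ≤
          ∫⁻ r in Ioi (0:ℝ), indicator (Ioo (0:ℝ) 3) (fun _ => ENNReal.ofReal (2 ^ α)) r :=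
        setLIntegral_mono (measurable_const.indicator measurableSet_Ioo) hb
      _ ≤ ∫⁻ r, indicator (Ioo (0:ℝ) 3) (fun _ => ENNReal.ofReal (2 ^ α)) r :=
        setLIntegral_le_lintegral _ _
      _ = ∫⁻ _ in Ioo (0:ℝ) 3, ENNReal.ofReal (2 ^ α) := lintegral_indicator measurableSet_Ioo _
      _ = ENNReal.ofReal (2 ^ α) * volume (Ioo (0:ℝ) 3) := by rw [setLIntegral_const]
      _ < ⊤ := ENNReal.mul_lt_top ENNReal.ofReal_lt_top measure_Ioo_lt_top
  have F₃ : ∫⁻ x : E3, g₃ ‖x‖ < ⊤ := by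
    apply aux_radial_lt g₃ hm₃
    have hb : ∀ r ∈ Ioi (0:ℝ), ENNReal.ofReal (r ^ 2) * g₃ r ≤
        indicator (Ioi (1:ℝ)) (fun r => ENNReal.ofReal (4 * r ^ (-α))) r := by
      intro r hr
      rcases le_or_gt (2:ℝ) r with h | h
      · rw [hg₃, indicator_of_mem (mem_Ici.mpr h),
          indicator_of_mem (mem_Ioi.mpr (lt_of_lt_of_le one_lt_two h)),
          ← ENNReal.ofReal_mul (sq_nonneg r)]
        apply ENNReal.ofReal_le_ofReal
        have : r ^ 2 * (4 * r ^ (-(2+α))) = 4 * (r ^ (2:ℝ) * r ^ (-(2+α))) := by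
          rw [Real.rpow_two]; ring
        rw [this, ← Real.rpow_add hr]
        rw [show (2 + -(2+α)) = -α by ring]
      · rw [hg₃, indicator_of_notMem (by simpa using h), mul_zero]
        exact zero_le
    calc ∫⁻ r in Ioi (0:ℝ), ENNReal.ofReal (r ^ 2) * g₃ r ≤
          ∫⁻ r in Ioi (0:ℝ), indicator (Ioi (1:ℝ)) (fun r => ENNReal.ofReal (4 * r ^ (-α))) r :=
        setLIntegral_mono (((measurable_const.mul
          (measurable_id.pow_const _)).ennreal_ofReal).indicator measurableSet_Ioi) hb
      _ ≤ ∫⁻ r, indicator (Ioi (1:ℝ)) (fun r => ENNReal.ofReal (4 * r ^ (-α))) r :=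
        setLIntegral_le_lintegral _ _
      _ = ∫⁻ r in Ioi (1:ℝ), ENNReal.ofReal (4 * r ^ (-α)) := lintegral_indicator measurableSet_Ioi _
      _ < ⊤ := by
        apply aux_fin
        exact (integrableOn_Ioi_rpow_of_lt (by linarith) one_pos).const_mul 4
  exact lt_of_le_of_lt split (ENNReal.add_lt_top.2 ⟨ENNReal.add_lt_top.2 ⟨F₁, F₂⟩, F₃⟩)

end

theorem stmt_2 (α : ℝ) (hα1 : 1 < α) (hα3 : α < 3) :
    ∃ C : ℝ, ∀ p : EuclideanSpace ℝ (Fin 3), p ≠ 0 →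
      Integrable (fun p' : EuclideanSpace ℝ (Fin 3) => ‖p - p'‖ ^ (-2 : ℝ) * ‖p'‖ ^ (-α)) ∧
        ∫ p' : EuclideanSpace ℝ (Fin 3), ‖p - p'‖ ^ (-2 : ℝ) * ‖p'‖ ^ (-α) =
          C * ‖p‖ ^ (1 - α) := by
  classical
  set e : EuclideanSpace ℝ (Fin 3) := EuclideanSpace.single 0 1 with he_def
  have he : ‖e‖ = 1 := by simp [he_def, EuclideanSpace.norm_single]
  set G : EuclideanSpace ℝ (Fin 3) → ℝ := fun x => ‖e - x‖ ^ (-2:ℝ) * ‖x‖ ^ (-α) with hG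
  have hintG : Integrable G := aux_int_e α hα1 hα3 he
  refine ⟨∫ x, G x, fun p hp => ?_⟩
  have hc : (0:ℝ) < ‖p‖ := norm_pos_iff.2 hp
  set c : ℝ := ‖p‖ with hc_def
  have hu : ‖c⁻¹ • p‖ = 1 := by
    rw [norm_smul, norm_inv, Real.norm_eq_abs, abs_of_pos hc, inv_mul_cancel₀ hc.ne']
  obtain ⟨R, hR⟩ := aux_exists_rot e (c⁻¹ • p) (by rw [he, hu])
  have hpe : c • R e = p := by rw [hR, smul_inv_smul₀ hc.ne']
  set F : EuclideanSpace ℝ (Fin 3) → ℝ := fun x => ‖p - x‖ ^ (-2:ℝ) * ‖x‖ ^ (-α) with hF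
  have hkey : ∀ x, F (c • R x) = c ^ (-2 - α) * G x := by
    intro x
    have hn1 : ‖p - c • R x‖ = c * ‖e - x‖ := by
      conv_lhs => rw [← hpe]
      rw [← smul_sub, ← map_sub, norm_smul, R.norm_map, Real.norm_eq_abs, abs_of_pos hc]
    have hn2 : ‖c • R x‖ = c * ‖x‖ := by
      rw [norm_smul, R.norm_map, Real.norm_eq_abs, abs_of_pos hc]
    rw [hF, hG]
    simp only
    rw [hn1, hn2, Real.mul_rpow hc.le (norm_nonneg _), Real.mul_rpow hc.le (norm_nonneg _),
      show (-2 - α : ℝ) = (-2) + (-α) by ring, Real.rpow_add hc]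
    ring
  have hcomp : (fun x => F (c • R x)) = fun x => c ^ (-2 - α) * G x := funext hkey
  have hint2 : Integrable fun x => F (c • R x) := by
    rw [hcomp]; exact hintG.const_mul _
  have hint3 : Integrable fun y => F (c • y) :=
    (R.measurePreserving.integrable_comp_emb R.toHomeomorph.measurableEmbedding).1 hint2
  have hintF : Integrable F := (integrable_comp_smul_iff volume F hc.ne').1 hint3
  refine ⟨hintF, ?_⟩
  have hA : ∫ x, F (c • x) = |((c ^ Module.finrank ℝ (EuclideanSpace ℝ (Fin 3)))⁻¹)| • ∫ x, F x :=
    Measure.integral_comp_smul volume F c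
  have hB : ∫ x, F (c • R x) = ∫ y, F (c • y) :=
    R.measurePreserving.integral_comp R.toHomeomorph.measurableEmbedding (fun y => F (c • y))
  have hC : ∫ x, F (c • R x) = c ^ (-2 - α) * ∫ x, G x := by
    rw [hcomp, integral_const_mul]
  have hdim : Module.finrank ℝ (EuclideanSpace ℝ (Fin 3)) = 3 := finrank_euclideanSpace_fin
  have hc3 : |((c ^ Module.finrank ℝ (EuclideanSpace ℝ (Fin 3)))⁻¹)| = c ^ (-3:ℝ) := by
    rw [hdim, abs_of_pos (by positivity), ← Real.rpow_natCast c 3, ← Real.rpow_neg hc.le]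
    norm_num
  have : c ^ (-2 - α) * ∫ x, G x = c ^ (-3:ℝ) * ∫ x, F x := by
    rw [← hC, hB, hA, hc3, smul_eq_mul]
  have hres : ∫ x, F x = c ^ ((1:ℝ) - α) * ∫ x, G x := by
    have h1 : ∫ x, F x = c ^ (3:ℝ) * (c ^ (-3:ℝ) * ∫ x, F x) := by
      rw [← mul_assoc, ← Real.rpow_add hc]
      norm_num
    rw [h1, ← this, ← mul_assoc, ← Real.rpow_add hc,
      show ((3:ℝ) + (-2 - α)) = 1 - α by ring]
  rw [hres, mul_comm]
end

section
/- The supremum over p ∈ (0, ∞) of the function p ↦ p²(p + √(p²+1)) / ((√(p²+1) + 1)(p² + 2 − √(p²+1))) equals 2. -/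
/-!
With `s = √(p ^ 2 + 1)`, so that `p ^ 2 = s ^ 2 - 1`, the ratio equals
`(s - 1) (p + s) / (s ^ 2 - s + 1)`. Since `p < s` it stays below `2`, and since `s - 1 ≤ p`
it is at least `2 - (s + 1) / (s ^ 2 - s + 1) ≥ 2 - 4 / s ≥ 2 - 4 / p`, which tends to `2`.
-/

open Real Filter Topology

section

variable {p s : ℝ}

theorem ratio_lt_two (hs0 : 0 ≤ s) (hs : s ^ 2 = p ^ 2 + 1) :
    p ^ 2 * (p + s) / ((s + 1) * (p ^ 2 + 2 - s)) < 2 := by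
  have hs1 : 1 ≤ s := by nlinarith
  have hps : p < s := by nlinarith
  have hden : 0 < (s + 1) * (p ^ 2 + 2 - s) := by nlinarith
  rw [div_lt_iff₀ hden]
  nlinarith [mul_le_mul_of_nonneg_left hps.le (by linarith : 0 ≤ s - 1)]

theorem two_sub_four_div_le_ratio (hp : 0 < p) (hs0 : 0 ≤ s) (hs : s ^ 2 = p ^ 2 + 1) :
    2 - 4 / p ≤ p ^ 2 * (p + s) / ((s + 1) * (p ^ 2 + 2 - s)) := by
  have hs1 : 1 ≤ s := by nlinarith
  have hps : p ≤ s := by nlinarith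
  have hsp : s - 1 ≤ p := by nlinarith
  have hden : 0 < (s + 1) * (p ^ 2 + 2 - s) := by nlinarith
  calc 2 - 4 / p ≤ 2 - 4 / s := by gcongr
    _ = (2 * s - 4) / s := by field_simp
    _ ≤ p ^ 2 * (p + s) / ((s + 1) * (p ^ 2 + 2 - s)) := by
      rw [div_le_div_iff₀ (by positivity) hden]
      nlinarith [mul_le_mul_of_nonneg_left hsp (by positivity : 0 ≤ s * (s - 1) * (s + 1))]

end

theorem stmt_6 :
    IsLUB ((fun p : ℝ =>
        p ^ 2 * (p + Real.sqrt (p ^ 2 + 1)) /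
          ((Real.sqrt (p ^ 2 + 1) + 1) * (p ^ 2 + 2 - Real.sqrt (p ^ 2 + 1)))) ''
      Set.Ioi 0) 2 := by
  have hsqrt (p : ℝ) : √(p ^ 2 + 1) ^ 2 = p ^ 2 + 1 := sq_sqrt (by positivity)
  refine ⟨?_, fun b hb => ?_⟩
  · rintro _ ⟨p, -, rfl⟩
    exact (ratio_lt_two (sqrt_nonneg _) (hsqrt p)).le
  · have hlim : Tendsto (fun p : ℝ => 2 - 4 / p) atTop (𝓝 2) := by
      simpa using (tendsto_const_nhds (x := (4 : ℝ)).div_atTop tendsto_id).const_sub (2 : ℝ)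
    refine le_of_tendsto hlim ((eventually_gt_atTop (0 : ℝ)).mono fun p hp => ?_)
    exact (two_sub_four_div_le_ratio hp (sqrt_nonneg _) (hsqrt p)).trans (hb ⟨p, hp, rfl⟩)
end

section
/- Let g₁(u) = Q₁((u + 1/u)/2) for u > 0, where Q₁(t) = (t/2)·ln((t+1)/(t−1)) − 1 is the Legendre function of the second kind of order 1. Then ∫₀^∞ g₁(u)/u du = 2. -/
open MeasureTheory Set Filter Topology

/-- The Legendre function of the second kind of order 1. -/
noncomputable def Q1 (t : ℝ) : ℝ := t / 2 * Real.log ((t + 1) / (t - 1)) - 1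

/-- `g₁(u) = Q₁((u + 1/u)/2)`. -/
noncomputable def g1 (u : ℝ) : ℝ := Q1 ((u + u⁻¹) / 2)

/-- The antiderivative of `g1 u / u` on `(0,1)` and `(1,∞)`. -/
noncomputable def F1 (u : ℝ) : ℝ := (u - u⁻¹) / 2 * (Real.log (u + 1) - Real.log (u - 1))

lemma g1_div_eq {u : ℝ} (hu : 0 < u) (h1 : u ≠ 1) :
    g1 u / u = (1 + (u⁻¹) ^ 2) / 2 * (Real.log (u + 1) - Real.log (u - 1)) - u⁻¹ := by
  have hu0 : u ≠ 0 := hu.ne'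
  have hup : u + 1 ≠ 0 := by positivity
  have hum : u - 1 ≠ 0 := sub_ne_zero.mpr h1
  have hden : (u + u⁻¹) / 2 - 1 ≠ 0 := by
    have : (u + u⁻¹) / 2 - 1 = (u - 1) ^ 2 / (2 * u) := by field_simp; ring
    rw [this]; positivity
  have hsq : ((u + u⁻¹) / 2 + 1) / ((u + u⁻¹) / 2 - 1) = ((u + 1) / (u - 1)) ^ 2 := by
    rw [div_pow, div_eq_div_iff hden (pow_ne_zero 2 hum)]
    field_simp
    ring
  unfold g1 Q1
  rw [hsq, show ((u+1)/(u-1))^2 = ((u+1)/(u-1))^(2:ℕ) by norm_num, Real.log_pow,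
    Real.log_div hup hum]
  field_simp
  ring

lemma hasDerivAt_logdiff {y : ℝ} (h1 : -1 < y) (h2 : y < 1) :
    HasDerivAt (fun v : ℝ => Real.log (1 + v) - Real.log (1 - v)) ((1 + y)⁻¹ + (1 - y)⁻¹) y := by
  have a : HasDerivAt (fun v : ℝ => Real.log (1 + v)) ((1 + y)⁻¹) y := by
    simpa [Function.comp_def] using (Real.hasDerivAt_log (by linarith : 1 + y ≠ 0)).comp y
      ((hasDerivAt_id y).const_add 1)
  have b : HasDerivAt (fun v : ℝ => Real.log (1 - v)) (-(1 - y)⁻¹) y := by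
    have := (Real.hasDerivAt_log (by linarith : 1 - y ≠ 0)).comp y
      ((hasDerivAt_id y).neg.const_add 1)
    simpa [sub_eq_add_neg, Function.comp_def] using this
  have := a.sub b; rw [sub_neg_eq_add] at this; exact this

lemma two_mul_le_log {x : ℝ} (hx : 0 ≤ x) (hx1 : x < 1) :
    2 * x ≤ Real.log (1 + x) - Real.log (1 - x) := by
  set f : ℝ → ℝ := fun v => Real.log (1 + v) - Real.log (1 - v) - 2 * v with hf
  have hder : ∀ y : ℝ, -1 < y → y < 1 → HasDerivAt f ((1 + y)⁻¹ + (1 - y)⁻¹ - 2) y := by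
    intro y h1 h2
    have h2v : HasDerivAt (fun v : ℝ => 2 * v) 2 y := by
      simpa using (hasDerivAt_id y).const_mul 2
    exact (hasDerivAt_logdiff h1 h2).sub h2v
  have mono : MonotoneOn f (Set.Ico 0 1) := by
    apply monotoneOn_of_deriv_nonneg (convex_Ico 0 1)
    · intro y hy
      exact (hder y (by linarith [hy.1]) hy.2).continuousAt.continuousWithinAt
    · rw [interior_Ico]
      intro y hy
      exact (hder y (by linarith [hy.1]) hy.2).differentiableAt.differentiableWithinAt
    · rw [interior_Ico]
      intro y hy
      rw [(hder y (by linarith [hy.1]) hy.2).deriv]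
      have hp : 0 < (1 + y) * (1 - y) := by nlinarith [hy.1, hy.2]
      have e1 : (1:ℝ) + y ≠ 0 := by nlinarith [hy.1]
      have e2 : (1:ℝ) - y ≠ 0 := by nlinarith [hy.2]
      have key : (1 + y)⁻¹ + (1 - y)⁻¹ = 2 / ((1 + y) * (1 - y)) := by
        field_simp
        ring
      rw [key, le_sub_iff_add_le, zero_add, le_div_iff₀ hp]
      nlinarith [sq_nonneg y]
  have h0 : f 0 ≤ f x := mono (by constructor <;> norm_num) ⟨hx, hx1⟩ hx
  have : f 0 = 0 := by simp [hf]
  rw [this] at h0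
  simp only [hf] at h0
  linarith

lemma hasDerivAt_F1 {u : ℝ} (hu : 0 < u) (h1 : u ≠ 1) :
    HasDerivAt F1 (g1 u / u) u := by
  have hu0 : u ≠ 0 := hu.ne'
  have hup : u + 1 ≠ 0 := by positivity
  have hum : u - 1 ≠ 0 := sub_ne_zero.mpr h1
  have hA : HasDerivAt (fun u : ℝ => (u - u⁻¹) / 2) ((1 + (u⁻¹) ^ 2) / 2) u := by
    have := ((hasDerivAt_id u).sub (hasDerivAt_inv hu0)).div_const 2
    refine this.congr_deriv ?_
    rw [inv_pow]; ring
  have hB1 : HasDerivAt (fun u : ℝ => Real.log (u + 1)) ((u + 1)⁻¹) u := by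
    simpa [Function.comp_def] using (Real.hasDerivAt_log hup).comp u ((hasDerivAt_id u).add_const 1)
  have hB2 : HasDerivAt (fun u : ℝ => Real.log (u - 1)) ((u - 1)⁻¹) u := by
    simpa [Function.comp_def] using (Real.hasDerivAt_log hum).comp u ((hasDerivAt_id u).sub_const 1)
  have := hA.mul (hB1.sub hB2)
  rw [g1_div_eq hu h1]
  refine this.congr_deriv ?_
  have key : (u - u⁻¹) / 2 * ((u + 1)⁻¹ - (u - 1)⁻¹) = -u⁻¹ := by
    field_simp
    ring
  rw [key, Pi.sub_apply]
  ring

lemma g1_div_nonneg {u : ℝ} (hu : 0 < u) (h1 : u ≠ 1) : 0 ≤ g1 u / u := by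
  rw [g1_div_eq hu h1]
  have hu0 : u ≠ 0 := hu.ne'
  rcases lt_or_gt_of_ne h1 with hlt | hgt
  · have key := two_mul_le_log hu.le hlt
    have hloge : Real.log (u + 1) - Real.log (u - 1)
        = Real.log (1 + u) - Real.log (1 - u) := by
      rw [show u - 1 = -(1 - u) by ring, Real.log_neg_eq_log, add_comm]
    rw [hloge]
    have h2 : (1 + (u⁻¹) ^ 2) / 2 * (2 * u)
        ≤ (1 + (u⁻¹) ^ 2) / 2 * (Real.log (1 + u) - Real.log (1 - u)) :=
      mul_le_mul_of_nonneg_left key (by positivity)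
    have h3 : (1 + (u⁻¹) ^ 2) / 2 * (2 * u) = u + u⁻¹ := by
      field_simp
    nlinarith [hu.le]
  · have hx1 : u⁻¹ < 1 := by
      rw [inv_lt_one_iff₀]; right; exact hgt
    have key := two_mul_le_log (inv_pos.mpr hu).le hx1
    have hloge : Real.log (1 + u⁻¹) - Real.log (1 - u⁻¹)
        = Real.log (u + 1) - Real.log (u - 1) := by
      rw [show (1:ℝ) + u⁻¹ = (u + 1) / u by field_simp,
        show (1:ℝ) - u⁻¹ = (u - 1) / u by rw [sub_div, div_self hu0, one_div],
        Real.log_div (by positivity) hu0, Real.log_div (sub_ne_zero.mpr h1) hu0]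
      ring
    rw [← hloge]
    have h2 : (1 + (u⁻¹) ^ 2) / 2 * (2 * u⁻¹)
        ≤ (1 + (u⁻¹) ^ 2) / 2 * (Real.log (1 + u⁻¹) - Real.log (1 - u⁻¹)) :=
      mul_le_mul_of_nonneg_left key (by positivity)
    have h3 : (1 + (u⁻¹) ^ 2) / 2 * (2 * u⁻¹) = u⁻¹ + (u⁻¹) ^ 3 := by
      field_simp
    nlinarith [pow_pos (inv_pos.mpr hu) 3]

lemma tendsto_x_log_x : Tendsto (fun s : ℝ => s * Real.log s) (𝓝[>] 0) (𝓝 0) := by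
  have h : Tendsto (fun s : ℝ => s * Real.log s) (𝓝 0) (𝓝 (0 * Real.log 0)) :=
    Real.continuous_mul_log.tendsto 0
  simpa using h.mono_left (nhdsWithin_le_nhds (s := Set.Ioi 0))

lemma tendsto_sub_one_mul_log_right :
    Tendsto (fun u : ℝ => (u - 1) * Real.log (u - 1)) (𝓝[>] 1) (𝓝 0) := by
  have hmap : Tendsto (fun u : ℝ => u - 1) (𝓝[>] 1) (𝓝[>] 0) := by
    apply tendsto_nhdsWithin_of_tendsto_nhds_of_eventually_within
    · have h : Tendsto (fun u : ℝ => u - 1) (𝓝 1) (𝓝 (1 - 1)) :=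
        (continuous_id.sub continuous_const).tendsto 1
      simpa using h.mono_left nhdsWithin_le_nhds
    · filter_upwards [self_mem_nhdsWithin] with u hu
      exact sub_pos.mpr (Set.mem_Ioi.mp hu)
  exact tendsto_x_log_x.comp hmap

lemma tendsto_sub_one_mul_log_left :
    Tendsto (fun u : ℝ => (u - 1) * Real.log (u - 1)) (𝓝[<] 1) (𝓝 0) := by
  have hmap : Tendsto (fun u : ℝ => 1 - u) (𝓝[<] 1) (𝓝[>] 0) := by
    apply tendsto_nhdsWithin_of_tendsto_nhds_of_eventually_within
    · have h : Tendsto (fun u : ℝ => 1 - u) (𝓝 1) (𝓝 (1 - 1)) :=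
        (continuous_const.sub continuous_id).tendsto 1
      simpa using h.mono_left nhdsWithin_le_nhds
    · filter_upwards [self_mem_nhdsWithin] with u (hu : u < 1)
      exact sub_pos.mpr hu
  have h := (tendsto_x_log_x.comp hmap).neg
  refine Tendsto.congr (fun u => ?_) (by simpa using h)
  show -((1 - u) * Real.log (1 - u)) = (u - 1) * Real.log (u - 1)
  rw [show u - 1 = -(1 - u) by ring, Real.log_neg_eq_log]
  ring

lemma F1_eq_aux {u : ℝ} (hu : u ≠ 0) :
    F1 u = (u - u⁻¹) / 2 * Real.log (u + 1)
      - (u + 1) / (2 * u) * ((u - 1) * Real.log (u - 1)) := by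
  unfold F1
  field_simp
  ring

lemma term1_contAt : Tendsto (fun u : ℝ => (u - u⁻¹) / 2 * Real.log (u + 1)) (𝓝 1) (𝓝 0) := by
  have c : ContinuousAt (fun u : ℝ => (u - u⁻¹) / 2 * Real.log (u + 1)) 1 := by
    apply ContinuousAt.mul
    · exact (continuousAt_id.sub (continuousAt_inv₀ one_ne_zero)).div_const 2
    · exact (Real.continuousAt_log (by norm_num)).comp (continuousAt_id.add continuousAt_const)
  simpa using c.tendsto

lemma term2_contAt : Tendsto (fun u : ℝ => (u + 1) / (2 * u)) (𝓝 1) (𝓝 1) := by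
  have c : ContinuousAt (fun u : ℝ => (u + 1) / (2 * u)) 1 := by
    apply ContinuousAt.div
    · exact continuousAt_id.add continuousAt_const
    · exact continuousAt_const.mul continuousAt_id
    · norm_num
  have := c.tendsto
  norm_num at this
  exact this

lemma F1_tendsto_right : Tendsto F1 (𝓝[>] 1) (𝓝 0) := by
  have h := (term1_contAt.mono_left nhdsWithin_le_nhds).sub
    ((term2_contAt.mono_left nhdsWithin_le_nhds).mul tendsto_sub_one_mul_log_right)
  refine Tendsto.congr' ?_ (by simpa using h)
  filter_upwards [self_mem_nhdsWithin] with u (hu : 1 < u)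
  exact (F1_eq_aux (by linarith)).symm

lemma F1_tendsto_left : Tendsto F1 (𝓝[<] 1) (𝓝 0) := by
  have h := (term1_contAt.mono_left nhdsWithin_le_nhds).sub
    ((term2_contAt.mono_left nhdsWithin_le_nhds).mul tendsto_sub_one_mul_log_left)
  refine Tendsto.congr' ?_ (by simpa using h)
  filter_upwards [(eventually_gt_nhds one_pos).filter_mono nhdsWithin_le_nhds] with u hu
  exact (F1_eq_aux (ne_of_gt hu)).symm

lemma F1_tendsto_atTop : Tendsto F1 atTop (𝓝 1) := by
  have h2 : Tendsto (fun u : ℝ => (u - 1) * Real.log (1 + 2 / (u - 1))) atTop (𝓝 2) := by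
    have := (Real.tendsto_mul_log_one_add_div_atTop 2).comp
      (tendsto_atTop_add_const_right atTop (-1) tendsto_id)
    simpa [Function.comp_def, sub_eq_add_neg] using this
  have h1 : Tendsto (fun u : ℝ => (u + 1) / (2 * u)) atTop (𝓝 (1 / 2)) := by
    have h : Tendsto (fun u : ℝ => (1 + u⁻¹) / 2) atTop (𝓝 ((1 + 0) / 2)) :=
      (tendsto_const_nhds.add tendsto_inv_atTop_zero).div_const 2
    refine Tendsto.congr' ?_ (by norm_num at h; exact h)
    filter_upwards [eventually_gt_atTop 0] with u hu
    rw [div_eq_div_iff (by norm_num) (by positivity)]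
    field_simp
  have h := h1.mul h2
  rw [show (1 / 2 : ℝ) * 2 = 1 by norm_num] at h
  refine Tendsto.congr' ?_ h
  filter_upwards [eventually_gt_atTop 1] with u hu
  have hu0 : u ≠ 0 := by linarith
  have hum : (0 : ℝ) < u - 1 := by linarith
  unfold F1
  rw [show 1 + 2 / (u - 1) = (u + 1) / (u - 1) by field_simp; ring,
    Real.log_div (by linarith) (ne_of_gt hum)]
  field_simp
  ring

lemma F1_tendsto_zero : Tendsto F1 (𝓝[>] 0) (𝓝 (-1)) := by
  have hslope : Tendsto (fun u : ℝ => (Real.log (1 + u) - Real.log (1 - u)) / u)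
      (𝓝[>] 0) (𝓝 2) := by
    have D : HasDerivAt (fun v : ℝ => Real.log (1 + v) - Real.log (1 - v)) 2 0 := by
      have := hasDerivAt_logdiff (y := 0) (by norm_num) (by norm_num)
      norm_num at this
      exact this
    rw [hasDerivAt_iff_tendsto_slope] at D
    have hmono : 𝓝[Set.Ioi (0:ℝ)] 0 ≤ 𝓝[{(0:ℝ)}ᶜ] 0 :=
      nhdsWithin_mono 0 (fun x hx => ne_of_gt hx)
    refine Tendsto.congr' ?_ (D.mono_left hmono)
    filter_upwards [self_mem_nhdsWithin] with u (hu : 0 < u)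
    simp [slope_fun_def, div_eq_inv_mul]
  have hfac : Tendsto (fun u : ℝ => (u ^ 2 - 1) / 2) (𝓝[>] 0) (𝓝 (-(1 / 2))) := by
    have c : ContinuousAt (fun u : ℝ => (u ^ 2 - 1) / 2) 0 := by fun_prop
    have := c.tendsto.mono_left (nhdsWithin_le_nhds (s := Set.Ioi (0:ℝ)))
    norm_num at this
    exact this
  have h := hfac.mul hslope
  rw [show (-(1 / 2) : ℝ) * 2 = -1 by norm_num] at h
  refine Tendsto.congr' ?_ h
  filter_upwards [self_mem_nhdsWithin,
    (eventually_lt_nhds one_pos).filter_mono nhdsWithin_le_nhds] with u (hu : 0 < u) hu1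
  have hu0 : u ≠ 0 := ne_of_gt hu
  unfold F1
  rw [show u + 1 = 1 + u by ring,
    show Real.log (u - 1) = Real.log (1 - u) by
      rw [show u - 1 = -(1 - u) by ring, Real.log_neg_eq_log]]
  field_simp

theorem stmt_8 :
    IntegrableOn (fun u : ℝ => g1 u / u) (Set.Ioi 0) ∧
      ∫ u in Set.Ioi (0 : ℝ), g1 u / u = 2 := by
  have hF10 : F1 1 = 0 := by simp [F1]
  -- the part on (1, ∞)
  have hcont1 : ContinuousWithinAt F1 (Set.Ici 1) 1 := by
    rw [← continuousWithinAt_diff_self, Set.Ici_sdiff_left]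
    unfold ContinuousWithinAt
    rw [hF10]
    exact F1_tendsto_right
  have hderiv1 : ∀ x ∈ Set.Ioi (1:ℝ), HasDerivAt F1 (g1 x / x) x := fun x hx =>
    hasDerivAt_F1 (lt_trans one_pos hx) (ne_of_gt hx)
  have hpos1 : ∀ x ∈ Set.Ioi (1:ℝ), 0 ≤ g1 x / x := fun x hx =>
    g1_div_nonneg (lt_trans one_pos hx) (ne_of_gt hx)
  have hint1 : IntegrableOn (fun u : ℝ => g1 u / u) (Set.Ioi 1) :=
    integrableOn_Ioi_deriv_of_nonneg hcont1 hderiv1 hpos1 F1_tendsto_atTop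
  have hval1 : ∫ x in Set.Ioi (1:ℝ), g1 x / x = 1 := by
    rw [integral_Ioi_of_hasDerivAt_of_nonneg hcont1 hderiv1 hpos1 F1_tendsto_atTop, hF10]
    norm_num
  -- the part on (0, 1]
  have hderiv2 : ∀ x ∈ Set.Ioo (0:ℝ) 1, HasDerivAt F1 (g1 x / x) x := fun x hx =>
    hasDerivAt_F1 hx.1 (ne_of_lt hx.2)
  set G : ℝ → ℝ := fun u => if u = 0 then -1 else F1 u with hG
  have hGeq : ∀ u : ℝ, u ≠ 0 → G u = F1 u := fun u hu => by simp [hG, hu]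
  have hcontG : ContinuousOn G (Set.Icc 0 1) := by
    intro x hx
    rcases eq_or_lt_of_le hx.1 with h0 | h0
    · -- x = 0
      subst h0
      rw [← continuousWithinAt_diff_self]
      have hIcc : Set.Icc (0:ℝ) 1 \ {0} = Set.Ioc 0 1 := by
        ext y; simp [Set.mem_Ioc, Set.mem_Icc, and_comm, lt_iff_le_and_ne, eq_comm]
      rw [hIcc]
      unfold ContinuousWithinAt
      have hG0 : G 0 = -1 := by simp [hG]
      rw [hG0]
      have hle : 𝓝[Set.Ioc (0:ℝ) 1] 0 ≤ 𝓝[Set.Ioi (0:ℝ)] 0 :=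
        nhdsWithin_mono 0 (fun y hy => hy.1)
      refine Tendsto.congr' ?_ (F1_tendsto_zero.mono_left hle)
      filter_upwards [self_mem_nhdsWithin] with u hu
      exact (hGeq u (ne_of_gt hu.1)).symm
    rcases eq_or_lt_of_le hx.2 with h1 | h1
    · -- x = 1
      subst h1
      rw [← continuousWithinAt_diff_self]
      have hIcc : Set.Icc (0:ℝ) 1 \ {1} = Set.Ico 0 1 := by
        ext y; simp [Set.mem_Ico, Set.mem_Icc, and_comm, lt_iff_le_and_ne]
      rw [hIcc]
      unfold ContinuousWithinAt
      have hG1 : G 1 = 0 := by rw [hGeq 1 one_ne_zero, hF10]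
      rw [hG1]
      have hle : 𝓝[Set.Ico (0:ℝ) 1] 1 ≤ 𝓝[Set.Iio (1:ℝ)] 1 :=
        nhdsWithin_mono 1 (fun y hy => hy.2)
      refine Tendsto.congr' ?_ (F1_tendsto_left.mono_left hle)
      filter_upwards [(eventually_gt_nhds one_pos).filter_mono nhdsWithin_le_nhds] with u hu
      exact (hGeq u (ne_of_gt hu)).symm
    · -- 0 < x < 1 (or x = 1 handled above); here 0 < x ≤ 1
      have hxa : ContinuousAt G x := by
        have hF : ContinuousAt F1 x := (hasDerivAt_F1 h0 (ne_of_lt h1)).continuousAt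
        refine hF.congr ?_
        filter_upwards [eventually_gt_nhds h0] with u hu
        exact (hGeq u (ne_of_gt hu)).symm
      exact hxa.continuousWithinAt
  have hderivG : ∀ x ∈ Set.Ioo (0:ℝ) 1, HasDerivAt G (g1 x / x) x := by
    intro x hx
    refine (hderiv2 x hx).congr_of_eventuallyEq ?_
    filter_upwards [eventually_gt_nhds hx.1] with u hu
    exact hGeq u (ne_of_gt hu)
  have hint2 : IntervalIntegrable (fun u : ℝ => g1 u / u) volume 0 1 := by
    apply intervalIntegral.intervalIntegrable_deriv_of_nonneg (g := G)
    · rw [Set.uIcc_of_le (by norm_num)]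
      exact hcontG
    · simpa using hderivG
    · simp only [min_eq_left (by norm_num : (0:ℝ) ≤ 1), max_eq_right (by norm_num : (0:ℝ) ≤ 1)]
      exact fun x hx => g1_div_nonneg hx.1 (ne_of_lt hx.2)
  have hval2 : ∫ y in (0:ℝ)..1, g1 y / y = 1 := by
    rw [intervalIntegral.integral_eq_sub_of_hasDerivAt_of_tendsto one_pos hderiv2 hint2
      F1_tendsto_zero F1_tendsto_left]
    norm_num
  have hint2' : IntegrableOn (fun u : ℝ => g1 u / u) (Set.Ioc 0 1) :=
    (intervalIntegrable_iff_integrableOn_Ioc_of_le (by norm_num)).mp hint2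
  have hsplit : Set.Ioc (0:ℝ) 1 ∪ Set.Ioi 1 = Set.Ioi 0 :=
    Set.Ioc_union_Ioi_eq_Ioi (by norm_num)
  constructor
  · rw [← hsplit]
    exact hint2'.union hint1
  · rw [← hsplit, setIntegral_union (Set.Ioc_disjoint_Ioi le_rfl) measurableSet_Ioi hint2' hint1]
    have heq : ∫ u in Set.Ioc (0:ℝ) 1, g1 u / u = ∫ y in (0:ℝ)..1, g1 y / y :=
      (intervalIntegral.integral_of_le (by norm_num)).symm
    rw [heq, hval2, hval1]
    norm_num
end

section
/- With g₁ as defined, ∫₀¹ g₁(u) du = π²/8 − 1/2. -/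
open MeasureTheory

open Real Filter

set_option maxHeartbeats 1000000

lemma summable_odd_sq : Summable (fun k : ℕ => 1 / (2*(k:ℝ)+1)^2) := by
  have h0 : Summable (fun n : ℕ => 1 / ((n:ℝ))^2) :=
    Real.summable_one_div_nat_pow.mpr (by norm_num)
  have h1 : Summable (fun n : ℕ => 1 / (((n+1:ℕ)):ℝ)^2) :=
    (summable_nat_add_iff 1).2 h0
  refine Summable.of_nonneg_of_le (fun k => by positivity) (fun k => ?_) h1
  push_cast
  have hk : (0:ℝ) ≤ (k:ℝ) := Nat.cast_nonneg k
  rw [div_le_div_iff₀ (by positivity) (by positivity)]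
  nlinarith

lemma hasSum_odd_sq : HasSum (fun k : ℕ => 1 / (2*(k:ℝ)+1)^2) (π^2/8) := by
  have hz := hasSum_zeta_two
  have he : HasSum (fun k : ℕ => 1 / ((2*(k:ℕ):ℕ):ℝ)^2) (π^2/6/4) := by
    have hfe : (fun k : ℕ => 1 / ((2*(k:ℕ):ℕ):ℝ)^2) = fun k : ℕ => 1/4 * (1/(k:ℝ)^2) := by
      funext k; push_cast; ring
    rw [hfe, show (π^2/6/4 : ℝ) = 1/4*(π^2/6) by ring]
    exact hz.mul_left _
  obtain ⟨b, hb⟩ := summable_odd_sq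
  have hb' : HasSum (fun k : ℕ => 1 / ((2*(k:ℕ)+1:ℕ):ℝ)^2) b := by
    convert hb using 2 with k; push_cast; ring
  have htot := HasSum.even_add_odd (f := fun n : ℕ => 1/((n:ℕ):ℝ)^2) he hb'
  have : π^2/6/4 + b = π^2/6 := htot.unique hz
  have hbv : b = π^2/8 := by linarith
  rwa [hbv] at hb

lemma hasSum_tel : HasSum (fun k : ℕ => 1 / ((2*(k:ℝ)+1)*(2*(k:ℝ)+3))) (1/2) := by
  rw [hasSum_iff_tendsto_nat_of_nonneg (fun k => by positivity)]
  have key : ∀ n : ℕ, ∑ k ∈ Finset.range n, 1 / ((2*(k:ℝ)+1)*(2*(k:ℝ)+3))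
      = 1/2 - 1/(2*(2*(n:ℝ)+1)) := by
    intro n
    induction n with
    | zero => norm_num
    | succ m ih =>
      rw [Finset.sum_range_succ, ih]
      have h1 : (2*(m:ℝ)+1) ≠ 0 := by positivity
      have h2 : (2*(m:ℝ)+3) ≠ 0 := by positivity
      push_cast
      field_simp
      ring
  simp_rw [key]
  have h4 : Tendsto (fun n : ℕ => 2*(2*(n:ℝ)+1)) atTop atTop := by
    have : Tendsto (fun n : ℕ => 4*(n:ℝ)+2) atTop atTop :=
      tendsto_atTop_add_const_right _ 2 (tendsto_natCast_atTop_atTop.const_mul_atTop (by norm_num))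
    exact this.congr (fun n => by ring)
  have h5 : Tendsto (fun n : ℕ => 1/(2*(2*(n:ℝ)+1))) atTop (nhds 0) := by
    exact (tendsto_inv_atTop_zero.comp h4).congr (fun n => (one_div _).symm)
  simpa using (tendsto_const_nhds (x := (1/2:ℝ))).sub h5

noncomputable def Fk (k : ℕ) (u : ℝ) : ℝ := (u ^ (2*k+2) + u ^ (2*k)) / (2*(k:ℝ)+1)

noncomputable def vk (k : ℕ) : ℝ := 1 / ((2*(k:ℝ)+1)*(2*(k:ℝ)+3)) + 1 / (2*(k:ℝ)+1)^2

lemma hasSum_vk : HasSum vk (1/2 + π^2/8) := hasSum_tel.add hasSum_odd_sq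

lemma Fk_cont (k : ℕ) : Continuous (Fk k) :=
  ((continuous_pow _).add (continuous_pow _)).div_const _

lemma pointwise_hasSum {u : ℝ} (hu : u ∈ Set.Ioo (0:ℝ) 1) :
    HasSum (fun k => Fk k u) (g1 u + 1) := by
  obtain ⟨hu0, hu1⟩ := hu
  have hu0' : u ≠ 0 := ne_of_gt hu0
  have h1u : (0:ℝ) < 1 + u := by linarith
  have h1u' : (0:ℝ) < 1 - u := by linarith
  have habs : |u| < 1 := by rw [abs_of_pos hu0]; exact hu1
  have hl := (hasSum_log_sub_log_of_abs_lt_one habs).mul_left ((u + u⁻¹) / 2)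
  have hfe : (fun k : ℕ => (u + u⁻¹) / 2 * ((2:ℝ) * (1 / (2 * k + 1)) * u ^ (2 * k + 1)))
      = fun k => Fk k u := by
    funext k
    have hp : u ^ (2*k+1) = u ^ (2*k) * u := by ring
    have hp2 : u ^ (2*k+2) = u ^ (2*k) * u * u := by ring
    unfold Fk
    rw [hp, hp2]
    field_simp
  rw [hfe] at hl
  have hval : (u + u⁻¹) / 2 * (Real.log (1 + u) - Real.log (1 - u)) = g1 u + 1 := by
    unfold g1 Q1
    have h1 : (u + u⁻¹)/2 + 1 = (1+u)^2/(2*u) := by field_simp; ring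
    have h2 : (u + u⁻¹)/2 - 1 = (1-u)^2/(2*u) := by field_simp; ring
    have h3 : ((u + u⁻¹)/2 + 1)/((u + u⁻¹)/2 - 1) = ((1+u)/(1-u))^2 := by
      rw [h1, h2, div_pow]
      rw [div_div_div_eq]
      rw [mul_comm ((1+u)^2) (2*u), mul_div_mul_left _ _ (by positivity : (2:ℝ)*u ≠ 0)]
    rw [h3, ← Real.rpow_natCast _ 2]
    rw [Real.log_rpow (by positivity)]
    rw [Real.log_div (ne_of_gt h1u) (ne_of_gt h1u')]
    push_cast
    ring
  rwa [hval] at hl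

lemma int_pow_Ioo (n : ℕ) : ∫ u in Set.Ioo (0:ℝ) 1, u ^ n = 1/((n:ℝ)+1) := by
  rw [← integral_Ioc_eq_integral_Ioo, ← intervalIntegral.integral_of_le zero_le_one,
    integral_pow]
  simp

lemma Fk_intOn (k : ℕ) : IntegrableOn (Fk k) (Set.Ioo (0:ℝ) 1) :=
  ((Fk_cont k).integrableOn_Ioc).mono_set Set.Ioo_subset_Ioc_self

lemma pow_intOn (n : ℕ) : IntegrableOn (fun u : ℝ => u ^ n) (Set.Ioo (0:ℝ) 1) :=
  ((continuous_pow n).integrableOn_Ioc).mono_set Set.Ioo_subset_Ioc_self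

lemma Fk_integral (k : ℕ) : ∫ u in Set.Ioo (0:ℝ) 1, Fk k u = vk k := by
  unfold Fk vk
  rw [integral_div, integral_add (pow_intOn _) (pow_intOn _), int_pow_Ioo, int_pow_Ioo]
  have h1 : (2*(k:ℝ)+1) ≠ 0 := by positivity
  have h3 : (2*(k:ℝ)+3) ≠ 0 := by positivity
  push_cast
  field_simp
  ring

lemma vk_nonneg (k : ℕ) : 0 ≤ vk k := by unfold vk; positivity

lemma Fk_norm_integral (k : ℕ) : ∫ u in Set.Ioo (0:ℝ) 1, ‖Fk k u‖ = vk k := by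
  rw [← Fk_integral k]
  refine setIntegral_congr_fun measurableSet_Ioo (fun u hu => ?_)
  have h0 : 0 < u := hu.1
  exact norm_of_nonneg (by unfold Fk; positivity)

lemma measurable_g1 : Measurable g1 := by
  unfold g1 Q1
  have hmi : Measurable (fun u : ℝ => u + u⁻¹) := measurable_id.add measurable_inv
  have hm : Measurable (fun u : ℝ => ((u + u⁻¹) / 2 + 1) / ((u + u⁻¹) / 2 - 1)) :=
    (((hmi.div_const 2).add measurable_const).div ((hmi.div_const 2).sub measurable_const))
  exact (((measurable_id.add measurable_inv).div_const 2).div_const 2).mul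
    (Real.measurable_log.comp hm) |>.sub measurable_const

lemma tsum_intOn : IntegrableOn (fun u => ∑' k, Fk k u) (Set.Ioo (0:ℝ) 1) := by
  have hlint : ∀ k, ∫⁻ u in Set.Ioo (0:ℝ) 1, ‖Fk k u‖₊ = ENNReal.ofReal (vk k) := by
    intro k
    simp_rw [← enorm_eq_nnnorm]
    rw [← ofReal_integral_norm_eq_lintegral_enorm (Fk_intOn k), Fk_norm_integral]
  constructor
  · have hm : Measurable (fun u => g1 u + 1) := measurable_g1.add measurable_const
    refine hm.aestronglyMeasurable.congr ?_
    filter_upwards [ae_restrict_mem measurableSet_Ioo] with u hu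
    exact ((pointwise_hasSum hu).tsum_eq).symm
  · rw [HasFiniteIntegral]
    calc ∫⁻ u in Set.Ioo (0:ℝ) 1, ‖∑' k, Fk k u‖₊
        ≤ ∫⁻ u in Set.Ioo (0:ℝ) 1, ∑' k, (‖Fk k u‖₊ : ENNReal) := by
          refine lintegral_mono (fun u => ?_)
          by_cases hs : Summable (fun k => ‖Fk k u‖₊)
          · rw [← ENNReal.coe_tsum hs]
            exact ENNReal.coe_le_coe.2 (nnnorm_tsum_le hs)
          · have : (∑' k, (‖Fk k u‖₊ : ENNReal)) = ⊤ := by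
              by_contra h
              exact hs (ENNReal.tsum_coe_ne_top_iff_summable.1 h)
            rw [this]; exact le_top
      _ = ∑' k, ∫⁻ u in Set.Ioo (0:ℝ) 1, ‖Fk k u‖₊ :=
          lintegral_tsum (fun k => ((Fk_cont k).measurable.nnnorm.coe_nnreal_ennreal).aemeasurable)
      _ < ⊤ := by
          simp_rw [hlint]
          rw [← ENNReal.ofReal_tsum_of_nonneg vk_nonneg hasSum_vk.summable]
          exact ENNReal.ofReal_lt_top

theorem stmt_9 :
    IntegrableOn g1 (Set.Ioo 0 1) ∧
      ∫ u in Set.Ioo (0 : ℝ) 1, g1 u = Real.pi ^ 2 / 8 - 1 / 2 := by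
  have hconst : IntegrableOn (fun _ : ℝ => (1:ℝ)) (Set.Ioo (0:ℝ) 1) :=
    integrableOn_const measure_Ioo_lt_top.ne
  have heq : Set.EqOn g1 (fun u => (∑' k, Fk k u) - 1) (Set.Ioo 0 1) := by
    intro u hu
    have := (pointwise_hasSum hu).tsum_eq
    simp only
    linarith
  have hInt : IntegrableOn g1 (Set.Ioo 0 1) := by
    refine (tsum_intOn.sub hconst).congr ?_
    filter_upwards [ae_restrict_mem measurableSet_Ioo] with u hu
    exact (heq hu).symm
  refine ⟨hInt, ?_⟩
  have hsum := hasSum_integral_of_summable_integral_norm (F := Fk)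
    (μ := volume.restrict (Set.Ioo (0:ℝ) 1)) Fk_intOn ?_
  swap
  · simp_rw [Fk_norm_integral]; exact hasSum_vk.summable
  have hvals : (fun k => ∫ u in Set.Ioo (0:ℝ) 1, Fk k u) = vk := funext Fk_integral
  rw [hvals] at hsum
  have htsum : ∫ u in Set.Ioo (0:ℝ) 1, ∑' k, Fk k u = 1/2 + π^2/8 :=
    (hsum.unique hasSum_vk)
  calc ∫ u in Set.Ioo (0:ℝ) 1, g1 u
      = ∫ u in Set.Ioo (0:ℝ) 1, ((∑' k, Fk k u) - 1) :=
        setIntegral_congr_fun measurableSet_Ioo heq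
    _ = (∫ u in Set.Ioo (0:ℝ) 1, ∑' k, Fk k u) - ∫ u in Set.Ioo (0:ℝ) 1, (1:ℝ) :=
        integral_sub tsum_intOn hconst
    _ = π^2/8 - 1/2 := by
        rw [htsum]
        simp [Real.volume_Ioo]
        ring
end

section
/- With g₁ as defined, ∫₁^∞ g₁(u) du = π²/8 + 1/2. -/
open MeasureTheory

open Set Real Filter


lemma aux_int (n : ℕ) :
    IntegrableOn (fun u : ℝ => u⁻¹ ^ (n + 2)) (Ioi 1) ∧
    ∫ u in Ioi (1:ℝ), u⁻¹ ^ (n + 2) = 1 / (n + 1) := by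
  have hlt : (-((n:ℝ) + 2)) < -1 := by linarith [Nat.cast_nonneg (α := ℝ) n]
  have key : ∀ u ∈ Ioi (1:ℝ), u ^ (-((n:ℝ) + 2)) = u⁻¹ ^ (n + 2) := by
    intro u hu
    have hu0 : (0:ℝ) < u := lt_trans one_pos hu
    rw [inv_pow, ← Real.rpow_natCast u (n + 2), ← Real.rpow_neg hu0.le]
    push_cast
    ring_nf
  constructor
  · exact (integrableOn_Ioi_rpow_of_lt hlt one_pos).congr_fun key measurableSet_Ioi
  · rw [← setIntegral_congr_fun measurableSet_Ioi key]
    rw [integral_Ioi_rpow_of_lt hlt one_pos]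
    rw [Real.one_rpow]
    have h1 : (-((n:ℝ)+2) + 1) = -((n:ℝ)+1) := by ring
    rw [h1]
    have h2 : ((n:ℝ)+1) ≠ 0 := by positivity
    field_simp

set_option maxHeartbeats 1000000

lemma hasSum_inv_odd_sq :
    HasSum (fun k : ℕ => 1 / (2 * (k:ℝ) + 1) ^ 2) (Real.pi ^ 2 / 8) := by
  set f : ℕ → ℝ := fun n => 1 / (n:ℝ) ^ 2 with hf
  have hb : HasSum f (Real.pi ^ 2 / 6) := hasSum_zeta_two
  have heven : HasSum (fun k : ℕ => f (2 * k)) (Real.pi ^ 2 / 24) := by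
    simp only [hf]
    have h := hb.mul_left (1/4)
    have heq : (fun k : ℕ => (1/4 : ℝ) * (1 / (k:ℝ)^2)) = fun k : ℕ => (1:ℝ) / ((2*k : ℕ):ℝ)^2 := by
      funext k
      push_cast
      rcases Nat.eq_zero_or_pos k with h0 | h0
      · simp [h0]
      · have : (k:ℝ) ≠ 0 := Nat.cast_ne_zero.2 h0.ne'
        field_simp
        ring
    rw [heq] at h
    have : (1/4 : ℝ) * (Real.pi ^ 2 / 6) = Real.pi ^ 2 / 24 := by ring
    rwa [this] at h
  have hinj : Function.Injective (fun k : ℕ => 2 * k + 1) := fun a b h => by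
    dsimp at h; omega
  have hsumm : Summable (fun k : ℕ => f (2 * k + 1)) :=
    hb.summable.comp_injective hinj
  obtain ⟨S, hodd⟩ := hsumm
  have htot := heven.even_add_odd hodd
  have hS : S = Real.pi ^ 2 / 8 := by
    have := htot.unique hb
    linarith
  rw [hS] at hodd
  have heq2 : (fun k : ℕ => f (2 * k + 1))
      = fun k : ℕ => 1 / (2 * (k:ℝ) + 1) ^ 2 := by
    simp only [hf]
    funext k; push_cast; ring_nf
  rwa [heq2] at hodd

lemma hasSum_telescope :
    HasSum (fun k : ℕ => 1 / ((2 * (k:ℝ) + 1) * (2 * (k:ℝ) + 3))) (1 / 2) := by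
  set b : ℕ → ℝ := fun k => 1 / (2 * (2 * (k:ℝ) + 1)) with hb
  have hterm : ∀ k : ℕ, 1 / ((2 * (k:ℝ) + 1) * (2 * (k:ℝ) + 3)) = b k - b (k + 1) := by
    intro k
    have h1 : (2 * (k:ℝ) + 1) ≠ 0 := by positivity
    have h3 : (2 * (k:ℝ) + 3) ≠ 0 := by positivity
    simp only [hb]
    push_cast
    field_simp
    ring
  have hnn : ∀ k : ℕ, 0 ≤ 1 / ((2 * (k:ℝ) + 1) * (2 * (k:ℝ) + 3)) := by
    intro k; positivity
  rw [hasSum_iff_tendsto_nat_of_nonneg hnn]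
  have hsum : ∀ n : ℕ, ∑ i ∈ Finset.range n, 1 / ((2 * (i:ℝ) + 1) * (2 * (i:ℝ) + 3))
      = b 0 - b n := by
    intro n
    rw [← Finset.sum_range_sub' b n]
    exact Finset.sum_congr rfl fun i _ => hterm i
  simp only [hsum]
  have hb0 : b 0 = 1 / 2 := by norm_num [hb]
  have htend : Tendsto b atTop (nhds 0) := by
    have hat : Tendsto (fun k : ℕ => 2 * (2 * (k:ℝ) + 1)) atTop atTop := by
      apply tendsto_atTop_mono (fun k : ℕ => ?_) tendsto_natCast_atTop_atTop
      have : (0:ℝ) ≤ (k:ℝ) := Nat.cast_nonneg k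
      linarith
    simpa only [hb, one_div, Pi.inv_def] using hat.inv_tendsto_atTop
  have hc : Tendsto (fun _ : ℕ => b 0) atTop (nhds (b 0)) := tendsto_const_nhds
  simpa only [sub_zero, hb0] using hc.sub htend

lemma hasSum_g1 {u : ℝ} (hu : 1 < u) :
    HasSum (fun m : ℕ => ((2*(m:ℝ)+1)⁻¹ + (2*(m:ℝ)+3)⁻¹) * u⁻¹ ^ (2*m+2)) (g1 u) := by
  have hu0 : (0:ℝ) < u := lt_trans one_pos hu
  set x : ℝ := u⁻¹ with hxdef
  have hx0 : 0 < x := inv_pos.2 hu0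
  have hx1 : x < 1 := inv_lt_one_of_one_lt₀ hu
  have hxabs : |x| < 1 := by rw [abs_of_pos hx0]; exact hx1
  have hux : u * x = 1 := mul_inv_cancel₀ hu0.ne'
  have h1px : (0:ℝ) < 1 + x := by linarith
  have h1mx : (0:ℝ) < 1 - x := by linarith
  -- the closed form of g1
  have hg1 : g1 u = (u + x)/2 * (Real.log (1 + x) - Real.log (1 - x)) - 1 := by
    rw [g1, Q1]
    have ht : ((u + x)/2 + 1) / ((u + x)/2 - 1) = ((1 + x)/(1 - x)) ^ 2 := by
      have hd1 : u ≠ 0 := hu0.ne'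
      have hd2 : (1:ℝ) - x ≠ 0 := h1mx.ne'
      have hd4 : (u + x)/2 - 1 ≠ 0 := by
        rw [hxdef]
        have he : (u + u⁻¹)/2 - 1 = (u - 1)^2 / (2 * u) := by field_simp; ring
        rw [he]
        exact (div_pos (pow_pos (by linarith) 2) (by linarith)).ne'
      rw [hxdef] at hd2 hd4 ⊢
      field_simp
      ring
    rw [ht, Real.log_pow, Real.log_div h1px.ne' h1mx.ne']
    push_cast
    ring
  have L := Real.hasSum_log_sub_log_of_abs_lt_one hxabs
  have Lt := L.mul_left ((u + x)/2)
  set A : ℕ → ℝ := fun k => (2*(k:ℝ)+1)⁻¹ * x ^ (2*k) with hAdef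
  set B : ℕ → ℝ := fun k => (2*(k:ℝ)+1)⁻¹ * x ^ (2*k+2) with hBdef
  have hF : HasSum (fun k : ℕ => A k + B k) (g1 u + 1) := by
    have heq : (fun k : ℕ => (u + x)/2 * (2 * (1/(2*(k:ℝ)+1)) * x ^ (2*k+1)))
        = fun k : ℕ => A k + B k := by
      funext k
      simp only [hAdef, hBdef]
      have key : (u + x)/2 * (2 * (1/(2*(k:ℝ)+1)) * x ^ (2*k+1))
          = (1/(2*(k:ℝ)+1)) * ((u * x) * x ^ (2*k)) + (1/(2*(k:ℝ)+1)) * x ^ (2*k+2) := by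
        ring
      rw [key, hux]
      ring
    rw [heq] at Lt
    have hval : (u + x)/2 * (Real.log (1 + x) - Real.log (1 - x)) = g1 u + 1 := by
      rw [hg1]; ring
    rwa [hval] at Lt
  -- summability of the two pieces
  have hgeo : Summable (fun k : ℕ => (x^2) ^ k) :=
    summable_geometric_of_lt_one (by positivity) (by nlinarith)
  have hck : ∀ k : ℕ, (1:ℝ) ≤ 2*(k:ℝ)+1 := fun k => by
    have : (0:ℝ) ≤ (k:ℝ) := Nat.cast_nonneg k
    linarith
  have hA : Summable A := by
    apply hgeo.of_nonneg_of_le (fun k => by simp only [hAdef]; positivity)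
    intro k
    simp only [hAdef]
    rw [pow_mul]
    calc (2*(k:ℝ)+1)⁻¹ * (x^2) ^ k ≤ 1 * (x^2) ^ k := by
          apply mul_le_mul_of_nonneg_right _ (by positivity)
          rw [inv_le_one_iff₀]; right; exact hck k
      _ = (x^2) ^ k := one_mul _
  have hB : Summable B := by
    apply hgeo.of_nonneg_of_le (fun k => by simp only [hBdef]; positivity)
    intro k
    simp only [hBdef]
    have h2 : x ^ (2*k+2) = (x^2) ^ k * x ^ 2 := by rw [← pow_mul]; ring
    rw [h2]
    have hx2 : x ^ 2 ≤ 1 := by nlinarith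
    calc (2*(k:ℝ)+1)⁻¹ * ((x^2)^k * x^2) ≤ 1 * ((x^2)^k * 1) := by
          apply mul_le_mul (by rw [inv_le_one_iff₀]; right; exact hck k)
          · exact mul_le_mul_of_nonneg_left hx2 (by positivity)
          · positivity
          · norm_num
      _ = (x^2) ^ k := by ring
  obtain ⟨sA, hsA⟩ := hA
  obtain ⟨sB, hsB⟩ := hB
  have hsum : sA + sB = g1 u + 1 := (hsA.add hsB).unique hF
  have hA0 : A 0 = 1 := by norm_num [hAdef]
  have hsA' : HasSum (fun m : ℕ => A (m + 1)) (sA - 1) := by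
    rw [hasSum_nat_add_iff 1]
    have h : sA - 1 + ∑ i ∈ Finset.range 1, A i = sA := by
      rw [Finset.sum_range_one, hA0]; ring
    rw [h]; exact hsA
  have hfin := hsA'.add hsB
  have heqG : (fun m : ℕ => A (m + 1) + B m)
      = fun m : ℕ => ((2*(m:ℝ)+1)⁻¹ + (2*(m:ℝ)+3)⁻¹) * x ^ (2*m+2) := by
    funext m
    simp only [hAdef, hBdef]
    have h1 : 2*(m+1) = 2*m+2 := by ring
    rw [h1]
    push_cast
    ring
  rw [heqG] at hfin
  have hfinal : sA - 1 + sB = g1 u := by linarith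
  rwa [hfinal] at hfin

theorem stmt_10 :
    IntegrableOn g1 (Set.Ioi 1) ∧
      ∫ u in Set.Ioi (1 : ℝ), g1 u = Real.pi ^ 2 / 8 + 1 / 2 := by
  have hfnn : ∀ (m : ℕ) (u : ℝ), 0 ≤ ((2*(m:ℝ)+1)⁻¹ + (2*(m:ℝ)+3)⁻¹) * u⁻¹ ^ (2*m+2) :=
    fun m u => mul_nonneg (by positivity) (Even.pow_nonneg ⟨m+1, by ring⟩ _)
  have hann : ∀ m : ℕ, 0 ≤ ((2*(m:ℝ)+1)⁻¹ + (2*(m:ℝ)+3)⁻¹) * (1/(2*(m:ℝ)+1)) :=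
    fun m => by positivity
  have hfint : ∀ m : ℕ, IntegrableOn
      (fun u : ℝ => ((2*(m:ℝ)+1)⁻¹ + (2*(m:ℝ)+3)⁻¹) * u⁻¹ ^ (2*m+2)) (Ioi 1) :=
    fun m => (aux_int (2*m)).1.const_mul _
  have hfval : ∀ m : ℕ, ∫ u in Ioi (1:ℝ), ((2*(m:ℝ)+1)⁻¹ + (2*(m:ℝ)+3)⁻¹) * u⁻¹ ^ (2*m+2)
      = ((2*(m:ℝ)+1)⁻¹ + (2*(m:ℝ)+3)⁻¹) * (1/(2*(m:ℝ)+1)) := by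
    intro m
    rw [integral_const_mul, (aux_int (2*m)).2]
    push_cast
    ring
  have hasum : HasSum (fun m : ℕ => ((2*(m:ℝ)+1)⁻¹ + (2*(m:ℝ)+3)⁻¹) * (1/(2*(m:ℝ)+1)))
      (Real.pi ^ 2 / 8 + 1/2) := by
    have h := hasSum_inv_odd_sq.add hasSum_telescope
    have heq : (fun k : ℕ => 1/(2*(k:ℝ)+1)^2 + 1/((2*(k:ℝ)+1)*(2*(k:ℝ)+3)))
        = fun m : ℕ => ((2*(m:ℝ)+1)⁻¹ + (2*(m:ℝ)+3)⁻¹) * (1/(2*(m:ℝ)+1)) := by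
      funext m
      have h1 : (2*(m:ℝ)+1) ≠ 0 := by positivity
      have h3 : (2*(m:ℝ)+3) ≠ 0 := by positivity
      field_simp
    rwa [heq] at h
  have hmeas : Measurable g1 := by
    unfold g1 Q1
    apply Measurable.sub _ measurable_const
    apply Measurable.mul
    · exact (measurable_id.add measurable_inv).div_const 2 |>.div_const 2
    · apply Real.measurable_log.comp
      exact ((((measurable_id.add measurable_inv).div_const 2).add_const 1).div
        (((measurable_id.add measurable_inv).div_const 2).sub_const 1))
  have hfmeas : ∀ m : ℕ, Measurable
      (fun u : ℝ => ((2*(m:ℝ)+1)⁻¹ + (2*(m:ℝ)+3)⁻¹) * u⁻¹ ^ (2*m+2)) :=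
    fun m => (measurable_inv.pow_const _).const_mul _
  have hae : ∀ᵐ u ∂(volume.restrict (Ioi (1:ℝ))),
      g1 u = ∑' m : ℕ, ((2*(m:ℝ)+1)⁻¹ + (2*(m:ℝ)+3)⁻¹) * u⁻¹ ^ (2*m+2) := by
    filter_upwards [ae_restrict_mem measurableSet_Ioi] with u hu
    exact ((hasSum_g1 hu).tsum_eq).symm
  have hg1nn : 0 ≤ᵐ[volume.restrict (Ioi (1:ℝ))] g1 := by
    filter_upwards [hae] with u h
    rw [h]
    exact tsum_nonneg (fun m => hfnn m u)
  have hlint_f : ∀ m : ℕ, ∫⁻ u in Ioi (1:ℝ),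
      ENNReal.ofReal (((2*(m:ℝ)+1)⁻¹ + (2*(m:ℝ)+3)⁻¹) * u⁻¹ ^ (2*m+2))
      = ENNReal.ofReal (((2*(m:ℝ)+1)⁻¹ + (2*(m:ℝ)+3)⁻¹) * (1/(2*(m:ℝ)+1))) := by
    intro m
    rw [← ofReal_integral_eq_lintegral_ofReal (hfint m) (Eventually.of_forall (hfnn m)), hfval m]
  have hlint : ∫⁻ u in Ioi (1:ℝ), ENNReal.ofReal (g1 u)
      = ENNReal.ofReal (Real.pi ^ 2 / 8 + 1/2) := by
    have step1 : ∫⁻ u in Ioi (1:ℝ), ENNReal.ofReal (g1 u)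
        = ∫⁻ u in Ioi (1:ℝ), ∑' m : ℕ,
          ENNReal.ofReal (((2*(m:ℝ)+1)⁻¹ + (2*(m:ℝ)+3)⁻¹) * u⁻¹ ^ (2*m+2)) := by
      apply lintegral_congr_ae
      filter_upwards [hae, ae_restrict_mem measurableSet_Ioi] with u h hu
      rw [h, ENNReal.ofReal_tsum_of_nonneg (fun m => hfnn m u) (hasSum_g1 hu).summable]
    rw [step1, lintegral_tsum (fun m => ((hfmeas m).ennreal_ofReal).aemeasurable)]
    simp_rw [hlint_f]
    rw [← ENNReal.ofReal_tsum_of_nonneg hann hasum.summable, hasum.tsum_eq]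
  have hint : IntegrableOn g1 (Ioi 1) := by
    refine ⟨hmeas.aestronglyMeasurable, ?_⟩
    rw [hasFiniteIntegral_iff_ofReal hg1nn, hlint]
    exact ENNReal.ofReal_lt_top
  refine ⟨hint, ?_⟩
  rw [integral_eq_lintegral_of_nonneg_ae hg1nn hmeas.aestronglyMeasurable, hlint,
    ENNReal.toReal_ofReal (by positivity)]
end

section
/- Let g₀(u) = ln|(u+1)/(u−1)| for u > 0, u ≠ 1. Then ∫₀^∞ g₀(u) u^{−1/2} du = ∫₀^∞ g₀(u) u^{−3/2} du = 2π. -/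
open MeasureTheory

/-- `g₀(u) = Q₀((u + 1/u)/2) = ln |(u+1)/(u−1)|`. -/
noncomputable def g0 (u : ℝ) : ℝ := Real.log |(u + 1) / (u - 1)|

open Real Set Filter Topology

/-- Antiderivative of `g0 u * u^(-1/2)` on `(0,∞)`. -/
noncomputable def Haux (u : ℝ) : ℝ :=
  2 * (Real.sqrt u * Real.log (u + 1)) - 2 * ((Real.sqrt u + 1) * Real.log (Real.sqrt u + 1))
    - 2 * ((Real.sqrt u - 1) * Real.log (Real.sqrt u - 1)) + 4 * Real.arctan (Real.sqrt u)

lemma g0_nonneg {x : ℝ} (hx : 0 < x) : 0 ≤ g0 x := by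
  rcases eq_or_ne x 1 with rfl | hx1
  · norm_num [g0]
  · apply Real.log_nonneg
    rw [abs_div, le_div_iff₀ (abs_pos.mpr (sub_ne_zero.mpr hx1)), one_mul]
    calc |x - 1| ≤ x + 1 := abs_le.mpr ⟨by linarith, by linarith⟩
    _ = |x + 1| := (abs_of_pos (by linarith)).symm

lemma f_nonneg {x : ℝ} (hx : 0 < x) : 0 ≤ g0 x * x ^ (-(1 : ℝ) / 2) :=
  mul_nonneg (g0_nonneg hx) (Real.rpow_nonneg hx.le _)

lemma g0_eq {x : ℝ} (hx : 0 < x) (hx1 : x ≠ 1) :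
    g0 x = Real.log (x + 1) - Real.log (Real.sqrt x + 1) - Real.log (Real.sqrt x - 1) := by
  have hs : Real.sqrt x * Real.sqrt x = x := Real.mul_self_sqrt hx.le
  have hs0 : 0 < Real.sqrt x := Real.sqrt_pos.mpr hx
  have hs1 : Real.sqrt x ≠ 1 := fun h => hx1 (by rw [← hs, h, one_mul])
  have h1 : x + 1 ≠ 0 := by positivity
  have h2 : x - 1 ≠ 0 := sub_ne_zero.mpr hx1
  have h3 : Real.sqrt x - 1 ≠ 0 := sub_ne_zero.mpr hs1
  have h4 : Real.sqrt x + 1 ≠ 0 := by positivity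
  have hfac : x - 1 = (Real.sqrt x - 1) * (Real.sqrt x + 1) := by linear_combination -hs
  rw [g0, Real.log_abs, Real.log_div h1 h2, hfac, Real.log_mul h3 h4]
  ring

lemma Haux_contOn : ContinuousOn Haux (Ici 0) := by
  have c1 : ContinuousOn (fun u : ℝ => Real.sqrt u * Real.log (u + 1)) (Ici 0) := by
    apply Real.continuous_sqrt.continuousOn.mul
    apply ContinuousOn.log (by fun_prop)
    intro x hx
    have : (0:ℝ) ≤ x := hx
    positivity
  have c2 : Continuous (fun u : ℝ => (Real.sqrt u + 1) * Real.log (Real.sqrt u + 1)) :=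
    Real.continuous_mul_log.comp (Real.continuous_sqrt.add continuous_const)
  have c3 : Continuous (fun u : ℝ => (Real.sqrt u - 1) * Real.log (Real.sqrt u - 1)) :=
    Real.continuous_mul_log.comp (Real.continuous_sqrt.sub continuous_const)
  have c4 : Continuous (fun u : ℝ => Real.arctan (Real.sqrt u)) :=
    Real.continuous_arctan.comp Real.continuous_sqrt
  exact (((continuousOn_const.mul c1).sub
      (continuousOn_const.mul c2.continuousOn)).sub
      (continuousOn_const.mul c3.continuousOn)).add
      (continuousOn_const.mul c4.continuousOn)

lemma Haux_deriv {x : ℝ} (hx : 0 < x) (hx1 : x ≠ 1) :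
    HasDerivAt Haux (g0 x * x ^ (-(1 : ℝ) / 2)) x := by
  have hs : Real.sqrt x * Real.sqrt x = x := Real.mul_self_sqrt hx.le
  have hs0 : 0 < Real.sqrt x := Real.sqrt_pos.mpr hx
  have hs1 : Real.sqrt x ≠ 1 := fun h => hx1 (by rw [← hs, h, one_mul])
  have h3 : Real.sqrt x - 1 ≠ 0 := sub_ne_zero.mpr hs1
  have h4 : Real.sqrt x + 1 ≠ 0 := by positivity
  have h1 : x + 1 ≠ 0 := by positivity
  have hdsqrt : HasDerivAt Real.sqrt (1 / (2 * Real.sqrt x)) x := Real.hasDerivAt_sqrt hx.ne'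
  have hlog : HasDerivAt (fun u : ℝ => Real.log (u + 1)) (1 / (x + 1)) x := by
    simpa using ((hasDerivAt_id x).add_const 1).log h1
  have hT1 : HasDerivAt (fun u : ℝ => 2 * (Real.sqrt u * Real.log (u + 1)))
      (2 * (1 / (2 * Real.sqrt x) * Real.log (x + 1) + Real.sqrt x * (1 / (x + 1)))) x :=
    (hdsqrt.mul hlog).const_mul 2
  have hT2 : HasDerivAt (fun u : ℝ => 2 * ((Real.sqrt u + 1) * Real.log (Real.sqrt u + 1)))
      (2 * ((Real.log (Real.sqrt x + 1) + 1) * (1 / (2 * Real.sqrt x)))) x :=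
    by have := ((Real.hasDerivAt_mul_log h4).comp x (hdsqrt.add_const 1)).const_mul 2; exact this
  have hT3 : HasDerivAt (fun u : ℝ => 2 * ((Real.sqrt u - 1) * Real.log (Real.sqrt u - 1)))
      (2 * ((Real.log (Real.sqrt x - 1) + 1) * (1 / (2 * Real.sqrt x)))) x :=
    by have := ((Real.hasDerivAt_mul_log h3).comp x (hdsqrt.sub_const 1)).const_mul 2; exact this
  have hT4 : HasDerivAt (fun u : ℝ => 4 * Real.arctan (Real.sqrt u))
      (4 * (1 / (1 + Real.sqrt x ^ 2) * (1 / (2 * Real.sqrt x)))) x :=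
    ((Real.hasDerivAt_arctan (Real.sqrt x)).comp x hdsqrt).const_mul 4
  have hD := ((hT1.sub hT2).sub hT3).add hT4
  refine hD.congr_deriv (Eq.symm ?_)
  have hrpow : x ^ (-(1 : ℝ) / 2) = (Real.sqrt x)⁻¹ := by
    rw [show (-(1 : ℝ) / 2) = -(1 / 2) by norm_num, Real.rpow_neg hx.le, ← Real.sqrt_eq_rpow]
  rw [hrpow, g0_eq hx hx1]
  set s := Real.sqrt x with hsd
  rw [← hs]
  have hss1 : s * s + 1 ≠ 0 := by positivity
  field_simp
  ring

set_option maxHeartbeats 1000000 in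
lemma Haux_tendsto : Tendsto Haux atTop (𝓝 (2 * π)) := by
  have hsqrt_top : Tendsto Real.sqrt atTop atTop := by
    rw [show Real.sqrt = fun x : ℝ => x ^ (1 / 2 : ℝ) from funext Real.sqrt_eq_rpow]
    exact tendsto_rpow_atTop (by norm_num)
  -- limit of u/(u-1)
  have hfrac : Tendsto (fun u : ℝ => u / (u - 1)) atTop (𝓝 1) := by
    have h0 : Tendsto (fun u : ℝ => 1 + (u - 1)⁻¹) atTop (𝓝 (1 + 0)) :=
      tendsto_const_nhds.add (tendsto_inv_atTop_zero.comp
        (tendsto_atTop_add_const_right _ (-1) tendsto_id))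
    rw [add_zero] at h0
    apply h0.congr'
    filter_upwards [eventually_gt_atTop (1 : ℝ)] with u hu
    have h1 : u - 1 ≠ 0 := sub_ne_zero.mpr hu.ne'
    field_simp
    ring
  -- term A
  have hA : Tendsto (fun u : ℝ => 2 * Real.sqrt u * Real.log ((u + 1) / (u - 1))) atTop (𝓝 0) := by
    have hb : Tendsto (fun u : ℝ => 4 * ((Real.sqrt u)⁻¹ * (u / (u - 1)))) atTop (𝓝 0) := by
      have hinv : Tendsto (fun u : ℝ => (Real.sqrt u)⁻¹) atTop (𝓝 0) :=
        tendsto_inv_atTop_zero.comp hsqrt_top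
      simpa using (hinv.mul hfrac).const_mul 4
    apply squeeze_zero'
    · filter_upwards [eventually_gt_atTop (1 : ℝ)] with u hu
      have h1 : 0 < u - 1 := by linarith
      refine mul_nonneg (by positivity) (Real.log_nonneg ?_)
      rw [le_div_iff₀ h1]; linarith
    · filter_upwards [eventually_gt_atTop (1 : ℝ)] with u hu
      have h1 : 0 < u - 1 := by linarith
      have hu0 : 0 < u := by linarith
      have hs0 : 0 < Real.sqrt u := Real.sqrt_pos.mpr hu0
      have hlog : Real.log ((u + 1) / (u - 1)) ≤ (u + 1) / (u - 1) - 1 :=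
        Real.log_le_sub_one_of_pos (by positivity)
      have heq : (u + 1) / (u - 1) - 1 = 2 / (u - 1) := by
        field_simp
        norm_num
      calc 2 * Real.sqrt u * Real.log ((u + 1) / (u - 1))
          ≤ 2 * Real.sqrt u * (2 / (u - 1)) := by
            apply mul_le_mul_of_nonneg_left _ (by positivity)
            rw [← heq]; exact hlog
        _ = 4 * ((Real.sqrt u)⁻¹ * (u / (u - 1))) := by
            have hss : Real.sqrt u * Real.sqrt u = u := Real.mul_self_sqrt hu0.le
            have h1' : u - 1 ≠ 0 := sub_ne_zero.mpr hu.ne'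
            rw [show u / (u - 1) = Real.sqrt u * Real.sqrt u / (u - 1) from by rw [hss]]
            field_simp
            ring
    · exact hb
  -- term B
  have hB : Tendsto (fun u : ℝ => 2 * Real.log ((Real.sqrt u - 1) / (Real.sqrt u + 1)))
      atTop (𝓝 0) := by
    have hratio : Tendsto (fun u : ℝ => (Real.sqrt u - 1) / (Real.sqrt u + 1)) atTop (𝓝 1) := by
      have h0 : Tendsto (fun u : ℝ => 1 - 2 * (Real.sqrt u + 1)⁻¹) atTop (𝓝 (1 - 2 * 0)) :=
        tendsto_const_nhds.sub ((tendsto_inv_atTop_zero.comp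
          (tendsto_atTop_add_const_right _ 1 hsqrt_top)).const_mul 2)
      rw [show (1 : ℝ) - 2 * 0 = 1 by norm_num] at h0
      apply h0.congr'
      filter_upwards [eventually_gt_atTop (0 : ℝ)] with u hu
      have hs : (0:ℝ) < Real.sqrt u + 1 := by positivity
      field_simp
      ring
    have hlog1 : Tendsto (fun u : ℝ => Real.log ((Real.sqrt u - 1) / (Real.sqrt u + 1)))
        atTop (𝓝 0) := by
      have := (Real.continuousAt_log one_ne_zero).tendsto.comp hratio
      simpa [Function.comp_def] using this
    simpa using hlog1.const_mul 2
  -- term C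
  have hC : Tendsto (fun u : ℝ => 4 * Real.arctan (Real.sqrt u)) atTop (𝓝 (4 * (π / 2))) :=
    ((Real.tendsto_arctan_atTop.mono_right nhdsWithin_le_nhds).comp hsqrt_top).const_mul 4
  have hsum := (hA.add hB).add hC
  rw [show (0 : ℝ) + 0 + 4 * (π / 2) = 2 * π by ring] at hsum
  apply hsum.congr'
  filter_upwards [eventually_gt_atTop (1 : ℝ)] with u hu
  have hu0 : 0 < u := by linarith
  have hs : Real.sqrt u * Real.sqrt u = u := Real.mul_self_sqrt hu0.le
  have hs1 : 1 < Real.sqrt u := by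
    rw [show (1:ℝ) = Real.sqrt 1 from (Real.sqrt_one).symm]
    exact Real.sqrt_lt_sqrt zero_le_one hu
  have h1 : u + 1 ≠ 0 := by positivity
  have h2 : u - 1 ≠ 0 := by intro h; linarith [sub_eq_zero.mp h]
  have h3 : Real.sqrt u - 1 ≠ 0 := sub_ne_zero.mpr hs1.ne'
  have h4 : Real.sqrt u + 1 ≠ 0 := by positivity
  have hfac : u - 1 = (Real.sqrt u - 1) * (Real.sqrt u + 1) := by linear_combination -hs
  rw [Haux, Real.log_div h1 h2, Real.log_div h3 h4, hfac, Real.log_mul h3 h4]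
  ring

lemma Haux_zero : Haux 0 = 0 := by
  simp [Haux, Real.sqrt_zero, Real.log_one, Real.arctan_zero, Real.log_neg_eq_log]

lemma key_half :
    IntegrableOn (fun u : ℝ => g0 u * u ^ (-(1 : ℝ) / 2)) (Set.Ioi 0) ∧
      ∫ u in Set.Ioi (0 : ℝ), g0 u * u ^ (-(1 : ℝ) / 2) = 2 * Real.pi := by
  set f : ℝ → ℝ := fun u => g0 u * u ^ (-(1 : ℝ) / 2) with hf
  have hcontIcc : ContinuousOn Haux (Icc 0 1) := Haux_contOn.mono Icc_subset_Ici_self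
  have hderivIoo : ∀ x ∈ Ioo (0:ℝ) 1, HasDerivAt Haux (f x) x :=
    fun x hx => Haux_deriv hx.1 (ne_of_lt hx.2)
  have hIoc : IntegrableOn f (Ioc 0 1) :=
    intervalIntegral.integrableOn_deriv_of_nonneg hcontIcc hderivIoo
      (fun x hx => f_nonneg hx.1)
  have hcont1 : ContinuousWithinAt Haux (Ici 1) 1 :=
    (Haux_contOn 1 (by norm_num)).mono (Ici_subset_Ici.mpr zero_le_one)
  have hderiv1 : ∀ x ∈ Ioi (1:ℝ), HasDerivAt Haux (f x) x :=
    fun x hx => Haux_deriv (lt_trans one_pos hx) (ne_of_gt hx)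
  have hpos1 : ∀ x ∈ Ioi (1:ℝ), 0 ≤ f x := fun x hx => f_nonneg (lt_trans one_pos hx)
  have hIoi1 : IntegrableOn f (Ioi 1) :=
    integrableOn_Ioi_deriv_of_nonneg hcont1 hderiv1 hpos1 Haux_tendsto
  have hunion : Ioc (0:ℝ) 1 ∪ Ioi 1 = Ioi 0 := Ioc_union_Ioi_eq_Ioi zero_le_one
  have hint : IntegrableOn f (Ioi 0) := by rw [← hunion]; exact hIoc.union hIoi1
  refine ⟨hint, ?_⟩
  have hII : IntervalIntegrable f volume 0 1 :=
    (intervalIntegrable_iff_integrableOn_Ioc_of_le zero_le_one).mpr hIoc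
  have h01 : ∫ u in Ioc (0:ℝ) 1, f u = Haux 1 - Haux 0 := by
    rw [← intervalIntegral.integral_of_le zero_le_one]
    exact intervalIntegral.integral_eq_sub_of_hasDerivAt_of_le zero_le_one hcontIcc hderivIoo hII
  have h1inf : ∫ u in Ioi (1:ℝ), f u = 2 * π - Haux 1 :=
    integral_Ioi_of_hasDerivAt_of_nonneg hcont1 hderiv1 hpos1 Haux_tendsto
  rw [← hunion, setIntegral_union (Ioc_disjoint_Ioi le_rfl) measurableSet_Ioi hIoc hIoi1,
    h01, h1inf, Haux_zero]
  ring

lemma g0_inv {x : ℝ} (hx : 0 < x) : g0 x⁻¹ = g0 x := by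
  rcases eq_or_ne x 1 with rfl | hx1
  · norm_num
  · have hx0 : x ≠ 0 := hx.ne'
    have hne : x⁻¹ - 1 ≠ 0 := by
      rw [sub_ne_zero]
      intro h
      exact hx1 (by rw [← inv_inv x, h, inv_one])
    have h1x : (1 : ℝ) - x ≠ 0 := fun h => hx1 (by linarith)
    have h2 : (x⁻¹ + 1) / (x⁻¹ - 1) = (x + 1) / (1 - x) := by
      rw [div_eq_div_iff hne h1x]
      linear_combination (-2 : ℝ) * inv_mul_cancel₀ hx0
    rw [g0, g0, h2, abs_div, abs_div, abs_sub_comm 1 x]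

lemma subst_eq {x : ℝ} (hx : 0 < x) :
    (|(-1 : ℝ)| * x ^ ((-1 : ℝ) - 1)) •
      (g0 (x ^ (-1 : ℝ)) * (x ^ (-1 : ℝ)) ^ (-(1 : ℝ) / 2)) = g0 x * x ^ (-(3 : ℝ) / 2) := by
  have hinv : x ^ (-1 : ℝ) = x⁻¹ := by
    rw [Real.rpow_neg hx.le, Real.rpow_one]
  have h1 : (x ^ (-1 : ℝ)) ^ (-(1 : ℝ) / 2) = x ^ ((1 : ℝ) / 2) := by
    rw [← Real.rpow_mul hx.le]
    norm_num
  rw [h1, hinv, g0_inv hx]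
  rw [show ((-1 : ℝ) - 1) = (-2 : ℝ) by norm_num, abs_neg, abs_one, one_mul, smul_eq_mul]
  rw [show g0 x * x ^ (-(3:ℝ)/2) = g0 x * (x ^ (-2:ℝ) * x ^ ((1:ℝ)/2)) from ?_]
  · ring
  · rw [← Real.rpow_add hx]
    norm_num

theorem stmt_15 :
    (IntegrableOn (fun u : ℝ => g0 u * u ^ (-(1 : ℝ) / 2)) (Set.Ioi 0) ∧
        ∫ u in Set.Ioi (0 : ℝ), g0 u * u ^ (-(1 : ℝ) / 2) = 2 * Real.pi) ∧
      IntegrableOn (fun u : ℝ => g0 u * u ^ (-(3 : ℝ) / 2)) (Set.Ioi 0) ∧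
        ∫ u in Set.Ioi (0 : ℝ), g0 u * u ^ (-(3 : ℝ) / 2) = 2 * Real.pi := by
  obtain ⟨hint, hval⟩ := key_half
  refine ⟨⟨hint, hval⟩, ?_, ?_⟩
  · have h := (integrableOn_Ioi_comp_rpow_iff
      (fun u : ℝ => g0 u * u ^ (-(1 : ℝ) / 2)) (p := -1) (by norm_num)).mpr hint
    exact h.congr_fun (fun x hx => by exact subst_eq hx) measurableSet_Ioi
  · have h := integral_comp_rpow_Ioi (fun u : ℝ => g0 u * u ^ (-(1 : ℝ) / 2))
      (p := -1) (by norm_num)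
    rw [← hval, ← h]
    exact setIntegral_congr_fun measurableSet_Ioi (fun x hx => by exact (subst_eq hx).symm)
end
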